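/- arXiv:1606.04157 — 3 statements merged into one kernel-verified Lean document; each statement's English description precedes it below -/
import Mathlib

section
/- If there is a subset X_1 ⊆ {1,…,n} with Σ_{i∈X_1} x_i = B, then there is a permutation π of the 2n+3 jobs of instance I whose total completion time satisfies F(π) ≤ Q0 + B. -/
/-- Completion time of the `i`-th scheduled job (0-based) in the normalized form:
`C_i(π) = Σ_{j ≤ i} p_{π_j} + max(0, Σ_{j ≤ i} δ_{π_j} - ML0)`. -/
def complTime (N : ℕ) (p δ : ℕ → ℤ) (ML0 : ℤ) (π : Equiv.Perm (Fin N)) (i : Fin N) : ℤ :=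
  (∑ j ∈ Finset.Iic i, p ((π j : ℕ))) + max 0 ((∑ j ∈ Finset.Iic i, δ ((π j : ℕ))) - ML0)

/-- Total completion time `F(π) = Σ_i C_i(π)`. -/
def totalCompl (N : ℕ) (p δ : ℕ → ℤ) (ML0 : ℤ) (π : Equiv.Perm (Fin N)) : ℤ :=
  ∑ i : Fin N, complTime N p δ ML0 π i

/-! ### Auxiliary definitions for the schedule -/

/-- An involution on `{0,…,2n+2}` fixing `{0,…,n}` and reversing the rest. -/
def sig0 (n k : ℕ) : ℕ := if k ≤ n then k else 3*n+3-k

/-- An involution swapping `t-1 ↔ n+1+t` for `t ∈ X₁`. -/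
def tau (n : ℕ) (X₁ : Finset ℕ) (k : ℕ) : ℕ :=
  if k ≤ n ∧ k+1 ∈ X₁ then k+n+2
  else if n+2 ≤ k ∧ k-(n+1) ∈ X₁ then k-(n+2) else k

lemma sig0_lt (n a : ℕ) (ha : a < 2*n+3) : sig0 n a < 2*n+3 := by
  simp only [sig0]; split <;> omega

lemma tau_lt (n : ℕ) (X₁ : Finset ℕ) (a : ℕ) (ha : a < 2*n+3) : tau n X₁ a < 2*n+3 := by
  simp only [tau]; split_ifs with h1 h2 <;> omega

lemma sig0_invol (n a : ℕ) (ha : a < 2*n+3) : sig0 n (sig0 n a) = a := by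
  simp only [sig0]; split_ifs <;> omega

lemma tau_invol (n : ℕ) (X₁ : Finset ℕ) (a : ℕ) (ha : a < 2*n+3) :
    tau n X₁ (tau n X₁ a) = a := by
  by_cases h1 : a ≤ n ∧ a+1 ∈ X₁
  · have e1 : tau n X₁ a = a+n+2 := by simp only [tau]; rw [if_pos h1]
    have h2 : ¬(a+n+2 ≤ n ∧ a+n+2+1 ∈ X₁) := by rintro ⟨h, -⟩; omega
    have h3 : n+2 ≤ a+n+2 ∧ a+n+2-(n+1) ∈ X₁ :=
      ⟨by omega, by rw [show a+n+2-(n+1) = a+1 by omega]; exact h1.2⟩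
    rw [e1]; simp only [tau]; rw [if_neg h2, if_pos h3]; omega
  · by_cases h2 : n+2 ≤ a ∧ a-(n+1) ∈ X₁
    · have e1 : tau n X₁ a = a-(n+2) := by simp only [tau]; rw [if_neg h1, if_pos h2]
      have h3 : a-(n+2) ≤ n ∧ a-(n+2)+1 ∈ X₁ :=
        ⟨by omega, by rw [show a-(n+2)+1 = a-(n+1) by omega]; exact h2.2⟩
      rw [e1]; simp only [tau]; rw [if_pos h3]; omega
    · have e1 : tau n X₁ a = a := by simp only [tau]; rw [if_neg h1, if_neg h2]
      rw [e1, e1]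

def sig0f (n : ℕ) (k : Fin (2*n+3)) : Fin (2*n+3) := ⟨sig0 n k, sig0_lt n k k.isLt⟩

def tauf (n : ℕ) (X₁ : Finset ℕ) (k : Fin (2*n+3)) : Fin (2*n+3) :=
  ⟨tau n X₁ k, tau_lt n X₁ k k.isLt⟩

/-- The schedule: first apply `sig0`, then `tau`. -/
def schedPerm (n : ℕ) (X₁ : Finset ℕ) : Equiv.Perm (Fin (2*n+3)) :=
  (Function.Involutive.toPerm (sig0f n) (fun k => Fin.ext (sig0_invol n k k.isLt))).trans
  (Function.Involutive.toPerm (tauf n X₁) (fun k => Fin.ext (tau_invol n X₁ k k.isLt)))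

lemma schedPerm_apply (n : ℕ) (X₁ : Finset ℕ) (k : Fin (2*n+3)) :
    ((schedPerm n X₁ k : Fin (2*n+3)) : ℕ) = tau n X₁ (sig0 n k) := rfl

/-- The job scheduled at position `t`. -/
def jobAt (n : ℕ) (X₁ : Finset ℕ) (t : ℕ) : ℕ :=
  if t ≤ n then (if t+1 ∈ X₁ then t+n+2 else t)
  else if t = n+1 then 2*n+2
  else if 2*n+2-t ∈ X₁ then 2*n+2-t-1 else 3*n+3-t

lemma tau_sig0_eq_jobAt (n : ℕ) (X₁ : Finset ℕ) (hmem : ∀ t ∈ X₁, 1 ≤ t ∧ t ≤ n)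
    (a : ℕ) (ha : a < 2*n+3) : tau n X₁ (sig0 n a) = jobAt n X₁ a := by
  by_cases h1 : a ≤ n
  · have e : sig0 n a = a := by simp only [sig0]; rw [if_pos h1]
    rw [e]
    by_cases h2 : a+1 ∈ X₁
    · simp only [tau, jobAt]; rw [if_pos ⟨h1, h2⟩, if_pos h1, if_pos h2]
    · have hn2 : ¬(n+2 ≤ a ∧ a-(n+1) ∈ X₁) := by rintro ⟨h, -⟩; omega
      simp only [tau, jobAt]
      rw [if_neg (by rintro ⟨-, h⟩; exact h2 h), if_neg hn2, if_pos h1, if_neg h2]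
  · have e : sig0 n a = 3*n+3-a := by simp only [sig0]; rw [if_neg h1]
    rw [e]
    by_cases h2 : a = n+1
    · subst h2
      rw [show 3*n+3-(n+1) = 2*n+2 by omega]
      have hc2 : ¬(n+2 ≤ 2*n+2 ∧ 2*n+2-(n+1) ∈ X₁) := by
        rintro ⟨-, h⟩; have := hmem _ h; omega
      simp only [tau, jobAt]
      rw [if_neg (by rintro ⟨h, -⟩; omega), if_neg hc2, if_neg h1]
      simp
    · have hc1 : ¬(3*n+3-a ≤ n ∧ 3*n+3-a+1 ∈ X₁) := by rintro ⟨h, -⟩; omega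
      by_cases h3 : 2*n+2-a ∈ X₁
      · have hm := hmem _ h3
        have hc2 : n+2 ≤ 3*n+3-a ∧ 3*n+3-a-(n+1) ∈ X₁ :=
          ⟨by omega, by rw [show 3*n+3-a-(n+1) = 2*n+2-a by omega]; exact h3⟩
        simp only [tau, jobAt]
        rw [if_neg hc1, if_pos hc2, if_neg h1, if_neg h2, if_pos h3]
        omega
      · have hc2 : ¬(n+2 ≤ 3*n+3-a ∧ 3*n+3-a-(n+1) ∈ X₁) := by
          rintro ⟨-, h⟩; rw [show 3*n+3-a-(n+1) = 2*n+2-a by omega] at h; exact h3 h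
        simp only [tau, jobAt]
        rw [if_neg hc1, if_neg hc2, if_neg h1, if_neg h2, if_neg h3]

/-! ### Sum helper lemmas -/

lemma sum_Iic_fin {N : ℕ} (f : ℕ → ℤ) (i : Fin N) :
    (∑ j ∈ Finset.Iic i, f (j : ℕ)) = ∑ t ∈ Finset.range ((i : ℕ) + 1), f t := by
  have h : Finset.range ((i:ℕ)+1) = (Finset.Iic i).map Fin.valEmbedding := by
    rw [Fin.map_valEmbedding_Iic]
    ext t
    simp [Nat.lt_succ_iff]
  rw [h, Finset.sum_map]
  rfl

lemma triangleSum (f : ℕ → ℤ) (K : ℕ) :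
    ∑ i ∈ Finset.range K, ∑ t ∈ Finset.range (i+1), f t
      = ∑ t ∈ Finset.range K, ((K : ℤ) - (t : ℤ)) * f t := by
  induction K with
  | zero => simp
  | succ K ih =>
    have h1 : ∑ t ∈ Finset.range (K+1), (((K+1 : ℕ) : ℤ) - (t : ℤ)) * f t
        = ∑ t ∈ Finset.range K, ((K : ℤ) - (t : ℤ)) * f t + ∑ t ∈ Finset.range (K+1), f t := by
      have h2 : ∀ t ∈ Finset.range (K+1),
          (((K+1 : ℕ) : ℤ) - (t : ℤ)) * f t = ((K : ℤ) - (t : ℤ)) * f t + f t := by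
        intro t _; push_cast; ring
      rw [Finset.sum_congr rfl h2, Finset.sum_add_distrib,
        Finset.sum_range_succ (fun t => ((K : ℤ) - (t : ℤ)) * f t)]
      simp
    rw [Finset.sum_range_succ, ih, h1]

lemma sum_indicator_shift (X : Finset ℕ) (x : ℕ → ℤ) (k : ℕ) :
    ∑ t ∈ Finset.range k, (if t+1 ∈ X then x (t+1) else 0) = ∑ s ∈ X ∩ Finset.Icc 1 k, x s := by
  induction k with
  | zero => simp
  | succ k ih =>
    rw [Finset.sum_range_succ, ih]
    by_cases h : k+1 ∈ X
    · rw [if_pos h]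
      have he : X ∩ Finset.Icc 1 (k+1) = insert (k+1) (X ∩ Finset.Icc 1 k) := by
        ext a
        simp only [Finset.mem_inter, Finset.mem_Icc, Finset.mem_insert]
        constructor
        · rintro ⟨ha, h1, h2⟩
          by_cases hak : a = k+1
          · exact Or.inl hak
          · exact Or.inr ⟨ha, h1, by omega⟩
        · rintro (rfl | ⟨ha, h1, h2⟩)
          · exact ⟨h, by omega, le_rfl⟩
          · exact ⟨ha, h1, by omega⟩
      rw [he, Finset.sum_insert (by simp only [Finset.mem_inter, Finset.mem_Icc]; rintro ⟨-, -, h2⟩; omega)]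
      ring
    · rw [if_neg h, add_zero]
      congr 1
      ext a
      simp only [Finset.mem_inter, Finset.mem_Icc]
      constructor
      · rintro ⟨ha, h1, h2⟩
        have hne : a ≠ k+1 := fun hak => h (hak ▸ ha)
        exact ⟨ha, h1, by omega⟩
      · rintro ⟨ha, h1, h2⟩
        have hne : a ≠ k+1 := fun hak => h (hak ▸ ha)
        exact ⟨ha, h1, by omega⟩

lemma sum_indicator_plain (X : Finset ℕ) (x : ℕ → ℤ) (k : ℕ) :
    ∑ t ∈ Finset.range k, (if t ∈ X then x t else 0) = ∑ s ∈ X ∩ Finset.range k, x s := by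
  induction k with
  | zero => simp
  | succ k ih =>
    rw [Finset.sum_range_succ, ih]
    by_cases h : k ∈ X
    · rw [if_pos h]
      have he : X ∩ Finset.range (k+1) = insert k (X ∩ Finset.range k) := by
        ext a
        simp only [Finset.mem_inter, Finset.mem_range, Finset.mem_insert]
        constructor
        · rintro ⟨ha, h2⟩
          by_cases hak : a = k
          · exact Or.inl hak
          · exact Or.inr ⟨ha, by omega⟩
        · rintro (rfl | ⟨ha, h2⟩)
          · exact ⟨h, by omega⟩
          · exact ⟨ha, by omega⟩
      rw [he, Finset.sum_insert (by simp only [Finset.mem_inter, Finset.mem_range]; rintro ⟨-, h2⟩; omega)]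
      ring
    · rw [if_neg h, add_zero]
      congr 1
      ext a
      simp only [Finset.mem_inter, Finset.mem_range]
      constructor
      · rintro ⟨ha, h2⟩
        have hne : a ≠ k := fun hak => h (hak ▸ ha)
        exact ⟨ha, by omega⟩
      · rintro ⟨ha, h2⟩
        have hne : a ≠ k := fun hak => h (hak ▸ ha)
        exact ⟨ha, by omega⟩

set_option maxHeartbeats 1000000 in
/-- if some subset `X₁ ⊆ {1,…,n}` of the Partition instance sums to `B`,
then some schedule of the `2n+3` jobs of the constructed instance `I` has total
completion time at most `Q0 + B`. -/
theorem stmt4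
    (n : ℕ) (x : ℕ → ℤ) (B M : ℤ)
    (hx : ∀ i, 1 ≤ i → i ≤ n → 0 < x i)
    (hB : ∑ i ∈ Finset.Icc 1 n, x i = 2 * B)
    (hM : (4 * (n : ℤ) + 8) * B < M)
    (p δ : ℕ → ℤ)
    (hp : ∀ i ≤ n, p i = ∑ j ∈ Finset.Icc 1 i, x j)
    (hp' : ∀ i ≤ n, p (n + 1 + i) = p i)
    (hplast : p (2 * n + 2) = M - 2 * B)
    (hδ : ∀ i ≤ n, δ i = M - 2 * p i)
    (hδ' : ∀ i ≤ n, δ (n + 1 + i) = δ i)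
    (hδlast : δ (2 * n + 2) = 0)
    (ML0 : ℤ) (hML0 : ML0 = (∑ i ∈ Finset.range (n + 1), δ i) - 2 * B)
    (Q0 : ℤ)
    (hQ0 : Q0 = (∑ j ∈ Finset.range (n + 1), ((n : ℤ) - (j : ℤ) + 1) * p j)
      + ((n : ℤ) + 2) * ((∑ j ∈ Finset.range (n + 1), p j) + 2 * B + p (2 * n + 2))
      + (∑ j ∈ Finset.range (n + 1), ((j : ℤ) + 1) * (p j + δ j)))
    (X₁ : Finset ℕ) (hX₁ : X₁ ⊆ Finset.Icc 1 n) (hX₁sum : ∑ i ∈ X₁, x i = B) :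
    ∃ π : Equiv.Perm (Fin (2 * n + 3)), totalCompl (2 * n + 3) p δ ML0 π ≤ Q0 + B := by
  refine ⟨schedPerm n X₁, ?_⟩
  -- basic facts
  have hmem : ∀ t ∈ X₁, 1 ≤ t ∧ t ≤ n := by
    intro t ht
    have := hX₁ ht
    rwa [Finset.mem_Icc] at this
  have hBnn : (0:ℤ) ≤ B := by
    rw [← hX₁sum]
    exact Finset.sum_nonneg fun i hi => le_of_lt (hx i (hmem i hi).1 (hmem i hi).2)
  have hnn : (0:ℤ) ≤ (n:ℤ) := Nat.cast_nonneg n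
  have hpn : p n = 2*B := by rw [hp n le_rfl, hB]
  have hpstep : ∀ k, k + 1 ≤ n → p (k+1) = p k + x (k+1) := by
    intro k hk
    rw [hp (k+1) hk, hp k (by omega), Finset.sum_Icc_succ_top (by omega)]
  have hp2B : ∀ k, k ≤ n → p k ≤ 2*B := by
    intro k hk
    rw [← hB, hp k hk]
    apply Finset.sum_le_sum_of_subset_of_nonneg (Finset.Icc_subset_Icc_right hk)
    intro j hj _
    rw [Finset.mem_Icc] at hj
    exact le_of_lt (hx j hj.1 hj.2)
  have hδnn : ∀ k, k ≤ n → 0 ≤ δ k := by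
    intro k hk
    rw [hδ k hk]
    nlinarith [hp2B k hk, hBnn, hnn]
  have hδn2B : 2*B ≤ δ n := by
    rw [hδ n le_rfl, hpn]
    nlinarith [hBnn, hnn]
  -- job values
  have hjob : ∀ k : Fin (2*n+3), ((schedPerm n X₁ k : Fin (2*n+3)) : ℕ) = jobAt n X₁ (k:ℕ) := by
    intro k
    rw [schedPerm_apply]
    exact tau_sig0_eq_jobAt n X₁ hmem k k.isLt
  -- pointwise evaluation
  have hq1 : ∀ t, t ≤ n → p (jobAt n X₁ t) = p t + (if t+1 ∈ X₁ then x (t+1) else 0) := by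
    intro t ht
    by_cases h : t+1 ∈ X₁
    · have h2 := hmem _ h
      have e : jobAt n X₁ t = n+1+(t+1) := by
        simp only [jobAt]; rw [if_pos ht, if_pos h]; omega
      rw [e, hp' (t+1) h2.2, hpstep t h2.2, if_pos h]
    · have e : jobAt n X₁ t = t := by simp only [jobAt]; rw [if_pos ht, if_neg h]
      rw [e, if_neg h, add_zero]
  have hd1 : ∀ t, t ≤ n → δ (jobAt n X₁ t) = δ t - 2*(if t+1 ∈ X₁ then x (t+1) else 0) := by
    intro t ht
    by_cases h : t+1 ∈ X₁
    · have h2 := hmem _ h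
      have e : jobAt n X₁ t = n+1+(t+1) := by
        simp only [jobAt]; rw [if_pos ht, if_pos h]; omega
      rw [e, hδ' (t+1) h2.2, hδ (t+1) h2.2, hδ t ht, hpstep t h2.2, if_pos h]
      ring
    · have e : jobAt n X₁ t = t := by simp only [jobAt]; rw [if_pos ht, if_neg h]
      rw [e, if_neg h]
      ring
  have ejob2 : jobAt n X₁ (n+1) = 2*n+2 := by
    simp only [jobAt]
    rw [if_neg (show ¬(n+1 ≤ n) by omega)]
    simp
  have hq2 : p (jobAt n X₁ (n+1)) = M - 2*B := by rw [ejob2, hplast]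
  have hd2 : δ (jobAt n X₁ (n+1)) = 0 := by rw [ejob2, hδlast]
  have hq3 : ∀ m, m ≤ n → p (jobAt n X₁ (2*n+2-m)) = p m - (if m ∈ X₁ then x m else 0) := by
    intro m hm
    have h1 : ¬(2*n+2-m ≤ n) := by omega
    have h2 : ¬(2*n+2-m = n+1) := by omega
    have h3 : 2*n+2-(2*n+2-m) = m := by omega
    by_cases h : m ∈ X₁
    · have hmm := hmem _ h
      have e : jobAt n X₁ (2*n+2-m) = m-1 := by
        simp only [jobAt]; rw [if_neg h1, if_neg h2, h3, if_pos h]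
      rw [e, if_pos h]
      have hst := hpstep (m-1) (by omega)
      rw [show m-1+1 = m by omega] at hst
      linarith [hst]
    · have e : jobAt n X₁ (2*n+2-m) = n+1+m := by
        simp only [jobAt]; rw [if_neg h1, if_neg h2, h3, if_neg h]; omega
      rw [e, hp' m hm, if_neg h, sub_zero]
  have hd3 : ∀ m, m ≤ n → δ (jobAt n X₁ (2*n+2-m)) = δ m + 2*(if m ∈ X₁ then x m else 0) := by
    intro m hm
    have h1 : ¬(2*n+2-m ≤ n) := by omega
    have h2 : ¬(2*n+2-m = n+1) := by omega
    have h3 : 2*n+2-(2*n+2-m) = m := by omega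
    by_cases h : m ∈ X₁
    · have hmm := hmem _ h
      have e : jobAt n X₁ (2*n+2-m) = m-1 := by
        simp only [jobAt]; rw [if_neg h1, if_neg h2, h3, if_pos h]
      rw [e, if_pos h]
      have hst := hpstep (m-1) (by omega)
      rw [show m-1+1 = m by omega] at hst
      have e1 : δ (m-1) = M - 2 * p (m-1) := hδ (m-1) (by omega)
      have e2 : δ m = M - 2 * p m := hδ m hm
      linarith [hst, e1, e2]
    · have e : jobAt n X₁ (2*n+2-m) = n+1+m := by
        simp only [jobAt]; rw [if_neg h1, if_neg h2, h3, if_neg h]; omega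
      rw [e, hδ' m hm, if_neg h]
      ring
  -- indicator sums
  have hXnn1 : ∀ t : ℕ, (0:ℤ) ≤ (if t+1 ∈ X₁ then x (t+1) else 0) := by
    intro t
    split_ifs with h
    · exact le_of_lt (hx _ (hmem _ h).1 (hmem _ h).2)
    · exact le_rfl
  have hXnn2 : ∀ m : ℕ, (0:ℤ) ≤ (if m ∈ X₁ then x m else 0) := by
    intro m
    split_ifs with h
    · exact le_of_lt (hx _ (hmem _ h).1 (hmem _ h).2)
    · exact le_rfl
  have hXB : ∑ t ∈ Finset.range (n+1), (if t+1 ∈ X₁ then x (t+1) else 0) = B := by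
    rw [sum_indicator_shift]
    rw [Finset.inter_eq_left.mpr (hX₁.trans (Finset.Icc_subset_Icc_right (by omega)))]
    exact hX₁sum
  have hXB' : ∑ m ∈ Finset.range (n+1), (if m ∈ X₁ then x m else 0) = B := by
    rw [sum_indicator_plain]
    rw [Finset.inter_eq_left.mpr (fun a ha => by
      have := hmem a ha; rw [Finset.mem_range]; omega)]
    exact hX₁sum
  -- prefix sums of δ∘jobAt
  have hdpre : ∀ i, i ≤ n → ∑ t ∈ Finset.range (i+1), δ (jobAt n X₁ t)
      = ∑ t ∈ Finset.range (i+1), δ t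
        - 2 * ∑ t ∈ Finset.range (i+1), (if t+1 ∈ X₁ then x (t+1) else 0) := by
    intro i hi
    rw [Finset.mul_sum, ← Finset.sum_sub_distrib]
    exact Finset.sum_congr rfl fun t ht => hd1 t (by rw [Finset.mem_range] at ht; omega)
  have hDdn : ∑ t ∈ Finset.range (n+2), δ (jobAt n X₁ t) = ML0 := by
    rw [Finset.sum_range_succ, hd2, add_zero, hdpre n le_rfl, hXB, hML0]
  have hpen1 : ∀ i, i ≤ n+1 → (∑ t ∈ Finset.range (i+1), δ (jobAt n X₁ t)) - ML0 ≤ 0 := by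
    intro i hi
    by_cases hin : i = n+1
    · subst hin
      rw [hDdn]
      simp
    · have hi' : i ≤ n := by omega
      rw [hdpre i hi', hML0]
      have hιn : 0 ≤ ∑ t ∈ Finset.range (i+1), (if t+1 ∈ X₁ then x (t+1) else 0) :=
        Finset.sum_nonneg fun t _ => hXnn1 t
      by_cases hin2 : i = n
      · subst hin2
        rw [hXB]
        linarith
      · have hsub : ∑ t ∈ Finset.range (i+1), δ t + δ n ≤ ∑ t ∈ Finset.range (n+1), δ t := by
          have h5 : ∑ t ∈ Finset.Ico (i+1) (n+1), δ t
              = ∑ t ∈ Finset.range (n+1), δ t - ∑ t ∈ Finset.range (i+1), δ t :=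
            Finset.sum_Ico_eq_sub _ (by omega)
          have h6 : δ n ≤ ∑ t ∈ Finset.Ico (i+1) (n+1), δ t := by
            apply Finset.single_le_sum (f := δ)
            · intro t ht
              rw [Finset.mem_Ico] at ht
              exact hδnn t (by omega)
            · rw [Finset.mem_Ico]; omega
          linarith
        linarith [hδn2B, hιn]
  have hpen3 : ∀ s, s ≤ n → (∑ t ∈ Finset.range (n+2+s+1), δ (jobAt n X₁ t)) - ML0
      = ∑ j ∈ Finset.range (s+1), (δ (n-j) + 2*(if n-j ∈ X₁ then x (n-j) else 0)) := by
    intro s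
    induction s with
    | zero =>
      intro _
      have e := hd3 n le_rfl
      rw [show 2*n+2-n = n+2 by omega] at e
      rw [show n+2+0+1 = (n+2)+1 by omega, Finset.sum_range_succ, e, hDdn,
        Finset.sum_range_one, show n-0 = n by omega]
      ring
    | succ s ih =>
      intro hs
      have ih' := ih (by omega)
      have e := hd3 (n-(s+1)) (by omega)
      rw [show 2*n+2-(n-(s+1)) = n+2+s+1 by omega] at e
      rw [show n+2+(s+1)+1 = (n+2+s+1)+1 by omega,
        Finset.sum_range_succ (fun t => δ (jobAt n X₁ t)) (n+2+s+1),
        Finset.sum_range_succ (fun j => δ (n-j) + 2*(if n-j ∈ X₁ then x (n-j) else 0)) (s+1),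
        e]
      linarith [ih']
  have hwnn : ∀ j, j ≤ n → (0:ℤ) ≤ δ (n-j) + 2*(if n-j ∈ X₁ then x (n-j) else 0) := by
    intro j hj
    have := hδnn (n-j) (by omega)
    have := hXnn2 (n-j)
    linarith
  -- rewrite totalCompl as a range-sum
  have hsum : totalCompl (2*n+3) p δ ML0 (schedPerm n X₁)
      = ∑ i ∈ Finset.range (2*n+3), ((∑ t ∈ Finset.range (i+1), p (jobAt n X₁ t))
          + max 0 ((∑ t ∈ Finset.range (i+1), δ (jobAt n X₁ t)) - ML0)) := by
    rw [totalCompl]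
    have hpt : ∀ i : Fin (2*n+3), complTime (2*n+3) p δ ML0 (schedPerm n X₁) i
        = (fun k : ℕ => (∑ t ∈ Finset.range (k+1), p (jobAt n X₁ t))
            + max 0 ((∑ t ∈ Finset.range (k+1), δ (jobAt n X₁ t)) - ML0)) (i : ℕ) := by
      intro i
      rw [complTime]
      have e1 : (∑ j ∈ Finset.Iic i, p ((schedPerm n X₁ j : Fin (2*n+3)) : ℕ))
          = ∑ t ∈ Finset.range ((i:ℕ)+1), p (jobAt n X₁ t) :=
        (Finset.sum_congr rfl fun j _ => congrArg p (hjob j)).trans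
          (sum_Iic_fin (fun a => p (jobAt n X₁ a)) i)
      have e2 : (∑ j ∈ Finset.Iic i, δ ((schedPerm n X₁ j : Fin (2*n+3)) : ℕ))
          = ∑ t ∈ Finset.range ((i:ℕ)+1), δ (jobAt n X₁ t) :=
        (Finset.sum_congr rfl fun j _ => congrArg δ (hjob j)).trans
          (sum_Iic_fin (fun a => δ (jobAt n X₁ a)) i)
      rw [e1, e2]
    calc ∑ i : Fin (2*n+3), complTime (2*n+3) p δ ML0 (schedPerm n X₁) i
        = ∑ i : Fin (2*n+3), (fun k : ℕ => (∑ t ∈ Finset.range (k+1), p (jobAt n X₁ t))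
            + max 0 ((∑ t ∈ Finset.range (k+1), δ (jobAt n X₁ t)) - ML0)) (i : ℕ) :=
          Finset.sum_congr rfl fun i _ => hpt i
      _ = _ := Fin.sum_univ_eq_sum_range (fun k : ℕ => (∑ t ∈ Finset.range (k+1), p (jobAt n X₁ t))
            + max 0 ((∑ t ∈ Finset.range (k+1), δ (jobAt n X₁ t)) - ML0)) (2*n+3)
  -- split off the two parts
  have h0 : totalCompl (2*n+3) p δ ML0 (schedPerm n X₁)
      = (∑ i ∈ Finset.range (2*n+3), ∑ t ∈ Finset.range (i+1), p (jobAt n X₁ t))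
        + ∑ i ∈ Finset.range (2*n+3),
            max 0 ((∑ t ∈ Finset.range (i+1), δ (jobAt n X₁ t)) - ML0) := by
    rw [hsum, Finset.sum_add_distrib]
  -- splitting lemmas for the range
  have hsplit1 : ∀ f : ℕ → ℤ, ∑ t ∈ Finset.range (2*n+3), f t
      = ∑ t ∈ Finset.range (n+1), f t + ∑ u ∈ Finset.range (n+2), f (n+1+u) := by
    intro f
    rw [show 2*n+3 = (n+1)+(n+2) by ring, Finset.sum_range_add]
  have hsplit2 : ∀ f : ℕ → ℤ, ∑ t ∈ Finset.range (2*n+3), f t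
      = ∑ t ∈ Finset.range (n+2), f t + ∑ s ∈ Finset.range (n+1), f (n+2+s) := by
    intro f
    rw [show 2*n+3 = (n+2)+(n+1) by ring, Finset.sum_range_add]
  -- the processing-time part
  have hSP : (∑ i ∈ Finset.range (2*n+3), ∑ t ∈ Finset.range (i+1), p (jobAt n X₁ t))
      = ∑ t ∈ Finset.range (n+1),
          (((2*n+3 : ℕ) : ℤ) - (t : ℤ)) * (p t + (if t+1 ∈ X₁ then x (t+1) else 0))
        + (∑ m ∈ Finset.range (n+1), ((m:ℤ)+1) * (p m - (if m ∈ X₁ then x m else 0))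
            + ((n:ℤ)+2)*(M-2*B)) := by
    have hch1 : ∑ t ∈ Finset.range (n+1), (((2*n+3 : ℕ) : ℤ) - (t : ℤ)) * p (jobAt n X₁ t)
        = ∑ t ∈ Finset.range (n+1),
            (((2*n+3 : ℕ) : ℤ) - (t : ℤ)) * (p t + (if t+1 ∈ X₁ then x (t+1) else 0)) :=
      Finset.sum_congr rfl fun t ht => by
        rw [Finset.mem_range] at ht
        rw [hq1 t (by omega)]
    have hchA : ∑ u ∈ Finset.range (n+1),
          (((2*n+3 : ℕ) : ℤ) - ((n+1+(u+1) : ℕ) : ℤ)) * p (jobAt n X₁ (n+1+(u+1)))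
        = ∑ m ∈ Finset.range (n+1), ((m:ℤ)+1) * (p m - (if m ∈ X₁ then x m else 0)) := by
      rw [← Finset.sum_range_reflect
        (fun m => ((m:ℤ)+1) * (p m - (if m ∈ X₁ then x m else 0))) (n+1)]
      apply Finset.sum_congr rfl
      intro u hu
      rw [Finset.mem_range] at hu
      have hun : u ≤ n := by omega
      rw [show n+1-1-u = n-u by omega, show n+1+(u+1) = 2*n+2-(n-u) by omega,
        hq3 (n-u) (by omega)]
      have h4 : ((2*n+2-(n-u) : ℕ) : ℤ) = ((2*n+2 : ℕ) : ℤ) - ((n-u : ℕ) : ℤ) :=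
        Nat.cast_sub (by omega)
      have h3 : ((2*n+3 : ℕ) : ℤ) - ((2*n+2-(n-u) : ℕ) : ℤ) = ((n-u : ℕ) : ℤ) + 1 := by
        rw [h4]; push_cast; ring
      rw [h3]
    have hchB : (((2*n+3 : ℕ) : ℤ) - ((n+1+0 : ℕ) : ℤ)) * p (jobAt n X₁ (n+1+0))
        = ((n:ℤ)+2)*(M-2*B) := by
      simp only [Nat.add_zero]
      rw [hq2]
      push_cast
      ring
    rw [triangleSum (fun t => p (jobAt n X₁ t)) (2*n+3),
      hsplit1 (fun t => (((2*n+3 : ℕ) : ℤ) - (t : ℤ)) * p (jobAt n X₁ t)),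
      Finset.sum_range_succ'
        (fun u => (((2*n+3 : ℕ) : ℤ) - ((n+1+u : ℕ) : ℤ)) * p (jobAt n X₁ (n+1+u))) (n+1),
      hch1, hchA, hchB]
  -- the penalty part
  have hSPen : (∑ i ∈ Finset.range (2*n+3),
        max 0 ((∑ t ∈ Finset.range (i+1), δ (jobAt n X₁ t)) - ML0))
      = ∑ m ∈ Finset.range (n+1), ((m:ℤ)+1) * (δ m + 2*(if m ∈ X₁ then x m else 0)) := by
    rw [hsplit2 (fun i => max 0 ((∑ t ∈ Finset.range (i+1), δ (jobAt n X₁ t)) - ML0))]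
    have hz : ∑ i ∈ Finset.range (n+2),
        max 0 ((∑ t ∈ Finset.range (i+1), δ (jobAt n X₁ t)) - ML0) = 0 :=
      Finset.sum_eq_zero fun i hi =>
        max_eq_left (hpen1 i (by rw [Finset.mem_range] at hi; omega))
    rw [hz, zero_add]
    have h1 : ∀ s ∈ Finset.range (n+1),
        max 0 ((∑ t ∈ Finset.range (n+2+s+1), δ (jobAt n X₁ t)) - ML0)
        = ∑ j ∈ Finset.range (s+1), (δ (n-j) + 2*(if n-j ∈ X₁ then x (n-j) else 0)) := by
      intro s hs
      rw [Finset.mem_range] at hs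
      rw [hpen3 s (by omega)]
      exact max_eq_right (Finset.sum_nonneg fun j hj =>
        hwnn j (by rw [Finset.mem_range] at hj; omega))
    rw [Finset.sum_congr rfl h1,
      triangleSum (fun j => δ (n-j) + 2*(if n-j ∈ X₁ then x (n-j) else 0)) (n+1),
      ← Finset.sum_range_reflect
        (fun m => ((m:ℤ)+1) * (δ m + 2*(if m ∈ X₁ then x m else 0))) (n+1)]
    apply Finset.sum_congr rfl
    intro j hj
    rw [Finset.mem_range] at hj
    rw [show n+1-1-j = n-j by omega]
    have hc : ((n+1 : ℕ) : ℤ) - (j : ℤ) = ((n-j : ℕ) : ℤ) + 1 := by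
      rw [Nat.cast_sub (by omega)]; push_cast; ring
    rw [hc]
  -- shift identity connecting the two indicator sums
  have H1 : ∑ m ∈ Finset.range (n+1), ((m:ℤ)+1) * (if m ∈ X₁ then x m else 0)
      = ∑ t ∈ Finset.range (n+1), ((t:ℤ)+2) * (if t+1 ∈ X₁ then x (t+1) else 0) := by
    rw [Finset.sum_range_succ' (fun m => ((m:ℤ)+1) * (if m ∈ X₁ then x m else 0)) n,
      Finset.sum_range_succ (fun t => ((t:ℤ)+2) * (if t+1 ∈ X₁ then x (t+1) else 0)) n]
    have h1 : (if (0:ℕ) ∈ X₁ then x 0 else 0) = 0 := by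
      rw [if_neg]; intro h; have := hmem _ h; omega
    have h2 : (if n+1 ∈ X₁ then x (n+1) else 0) = 0 := by
      rw [if_neg]; intro h; have := hmem _ h; omega
    rw [h1, h2]
    have h3 : ∀ i ∈ Finset.range n,
        (((i+1:ℕ):ℤ)+1) * (if i+1 ∈ X₁ then x (i+1) else 0)
        = ((i:ℤ)+2) * (if i+1 ∈ X₁ then x (i+1) else 0) := by
      intro i _; push_cast; ring
    rw [Finset.sum_congr rfl h3]
    ring
  -- combine pointwise
  have e_lhs : ∑ t ∈ Finset.range (n+1),
        (((2*n+3 : ℕ) : ℤ) - (t : ℤ)) * (p t + (if t+1 ∈ X₁ then x (t+1) else 0))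
      + ∑ m ∈ Finset.range (n+1), ((m:ℤ)+1) * (p m - (if m ∈ X₁ then x m else 0))
      + ∑ m ∈ Finset.range (n+1), ((m:ℤ)+1) * (δ m + 2*(if m ∈ X₁ then x m else 0))
      = ∑ t ∈ Finset.range (n+1), ((2*(n:ℤ)+4) * p t + ((t:ℤ)+1) * δ t)
        + (∑ t ∈ Finset.range (n+1), (((2*n+3 : ℕ) : ℤ) - (t : ℤ)) * (if t+1 ∈ X₁ then x (t+1) else 0)
          + ∑ m ∈ Finset.range (n+1), ((m:ℤ)+1) * (if m ∈ X₁ then x m else 0)) := by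
    rw [← Finset.sum_add_distrib, ← Finset.sum_add_distrib,
      ← Finset.sum_add_distrib, ← Finset.sum_add_distrib]
    apply Finset.sum_congr rfl
    intro t _
    push_cast
    ring
  have e_iota : ∑ t ∈ Finset.range (n+1),
        (((2*n+3 : ℕ) : ℤ) - (t : ℤ)) * (if t+1 ∈ X₁ then x (t+1) else 0)
      + ∑ m ∈ Finset.range (n+1), ((m:ℤ)+1) * (if m ∈ X₁ then x m else 0)
      = (2*(n:ℤ)+4)*B + B := by
    rw [H1, ← Finset.sum_add_distrib]
    have h : ∀ t ∈ Finset.range (n+1),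
        (((2*n+3 : ℕ) : ℤ) - (t : ℤ)) * (if t+1 ∈ X₁ then x (t+1) else 0)
          + ((t:ℤ)+2) * (if t+1 ∈ X₁ then x (t+1) else 0)
        = (2*(n:ℤ)+5) * (if t+1 ∈ X₁ then x (t+1) else 0) := by
      intro t _; push_cast; ring
    rw [Finset.sum_congr rfl h, ← Finset.mul_sum, hXB]
    ring
  -- the right-hand side
  have hcomb : ∑ j ∈ Finset.range (n+1), ((n:ℤ) - (j:ℤ) + 1) * p j
      + ∑ j ∈ Finset.range (n+1), ((n:ℤ)+2) * p j
      + ∑ j ∈ Finset.range (n+1), ((j:ℤ)+1) * (p j + δ j)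
      = ∑ t ∈ Finset.range (n+1), ((2*(n:ℤ)+4) * p t + ((t:ℤ)+1) * δ t) := by
    rw [← Finset.sum_add_distrib, ← Finset.sum_add_distrib]
    apply Finset.sum_congr rfl
    intro t _
    ring
  have hexp : ((n:ℤ)+2) * ((∑ j ∈ Finset.range (n+1), p j) + 2*B + (M-2*B))
      = ∑ j ∈ Finset.range (n+1), ((n:ℤ)+2) * p j + ((2*(n:ℤ)+4)*B + ((n:ℤ)+2)*(M-2*B)) := by
    rw [← Finset.mul_sum]
    ring
  rw [hQ0, hplast]
  linarith [h0, hSP, hSPen, e_lhs, e_iota, hcomb, hexp]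
end

section
/- Let π be an optimal schedule for instance I with total completion time F(π) ≤ Q0 + B. Then at most n+1 jobs are scheduled after the job J_{2n+2}; equivalently, J_{2n+2} occupies position at least n+2 in π. -/
set_option maxHeartbeats 1000000


/-- if `π` is an optimal schedule for instance `I` with total completion
time at most `Q0 + B`, then at most `n+1` jobs are scheduled after job `J_{2n+2}`;
equivalently, `J_{2n+2}` occupies (0-based) position at least `n+1` in `π`. -/
theorem stmt6
    (n : ℕ) (x : ℕ → ℤ) (B M : ℤ)
    (hx : ∀ i, 1 ≤ i → i ≤ n → 0 < x i)
    (hB : ∑ i ∈ Finset.Icc 1 n, x i = 2 * B)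
    (hM : (4 * (n : ℤ) + 8) * B < M)
    (p δ : ℕ → ℤ)
    (hp : ∀ i ≤ n, p i = ∑ j ∈ Finset.Icc 1 i, x j)
    (hp' : ∀ i ≤ n, p (n + 1 + i) = p i)
    (hplast : p (2 * n + 2) = M - 2 * B)
    (hδ : ∀ i ≤ n, δ i = M - 2 * p i)
    (hδ' : ∀ i ≤ n, δ (n + 1 + i) = δ i)
    (hδlast : δ (2 * n + 2) = 0)
    (ML0 : ℤ) (hML0 : ML0 = (∑ i ∈ Finset.range (n + 1), δ i) - 2 * B)
    (Q0 : ℤ)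
    (hQ0 : Q0 = (∑ j ∈ Finset.range (n + 1), ((n : ℤ) - (j : ℤ) + 1) * p j)
      + ((n : ℤ) + 2) * ((∑ j ∈ Finset.range (n + 1), p j) + 2 * B + p (2 * n + 2))
      + (∑ j ∈ Finset.range (n + 1), ((j : ℤ) + 1) * (p j + δ j)))
    (π : Equiv.Perm (Fin (2 * n + 3)))
    (hopt : ∀ σ : Equiv.Perm (Fin (2 * n + 3)),
      totalCompl (2 * n + 3) p δ ML0 π ≤ totalCompl (2 * n + 3) p δ ML0 σ)
    (hQ : totalCompl (2 * n + 3) p δ ML0 π ≤ Q0 + B) :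
    (Finset.univ.filter
        (fun i : Fin (2 * n + 3) => π.symm ⟨2 * n + 2, by omega⟩ < i)).card ≤ n + 1 ∧
    n + 1 ≤ ((π.symm ⟨2 * n + 2, by omega⟩ : Fin (2 * n + 3)) : ℕ) := by
  have hB0 : 0 ≤ B := by
    have hpos : 0 ≤ ∑ i ∈ Finset.Icc 1 n, x i :=
      Finset.sum_nonneg fun i hi => le_of_lt
        (hx i (Finset.mem_Icc.mp hi).1 (Finset.mem_Icc.mp hi).2)
    linarith
  have hple : ∀ m ≤ n, 0 ≤ p m ∧ p m ≤ 2 * B := by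
    intro m hm
    rw [hp m hm]
    constructor
    · exact Finset.sum_nonneg fun i hi => le_of_lt
        (hx i (Finset.mem_Icc.mp hi).1 (le_trans (Finset.mem_Icc.mp hi).2 hm))
    · rw [← hB]
      apply Finset.sum_le_sum_of_subset_of_nonneg (Finset.Icc_subset_Icc_right hm)
      intro i hi _
      exact le_of_lt (hx i (Finset.mem_Icc.mp hi).1 (Finset.mem_Icc.mp hi).2)
  have hjob : ∀ m < 2 * n + 2, 0 ≤ p m ∧ p m ≤ 2 * B ∧ δ m = M - 2 * p m := by
    intro m hm
    by_cases h : m ≤ n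
    · exact ⟨(hple m h).1, (hple m h).2, hδ m h⟩
    · have h1 : m = n + 1 + (m - (n + 1)) := by omega
      have h2 : m - (n + 1) ≤ n := by omega
      rw [h1, hp' _ h2, hδ' _ h2]
      exact ⟨(hple _ h2).1, (hple _ h2).2, hδ _ h2⟩
  set S : ℤ := ∑ j ∈ Finset.range (n + 1), p j with hS
  have hS2 : S ≤ ((n : ℤ) + 1) * (2 * B) := by
    rw [hS]
    calc ∑ j ∈ Finset.range (n + 1), p j ≤ ∑ _j ∈ Finset.range (n + 1), 2 * B :=
          Finset.sum_le_sum fun j hj => (hple j (by simpa using Nat.lt_succ_iff.mp (Finset.mem_range.mp hj))).2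
      _ = ((n : ℤ) + 1) * (2 * B) := by
          rw [Finset.sum_const, Finset.card_range]; ring
  have hS3 : 2 * B ≤ S := by
    have h1 : p n ≤ S := by
      apply Finset.single_le_sum (f := p) (fun j hj => (hple j (by simpa using Nat.lt_succ_iff.mp (Finset.mem_range.mp hj))).1)
      simp
    have h2 : p n = 2 * B := by rw [hp n le_rfl, hB]
    linarith
  have hML0' : ML0 = ((n : ℤ) + 1) * M - 2 * S - 2 * B := by
    rw [hML0]
    have h1 : ∑ i ∈ Finset.range (n + 1), δ i
        = ∑ i ∈ Finset.range (n + 1), (M - 2 * p i) :=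
      Finset.sum_congr rfl fun i hi => hδ i (by simpa using Nat.lt_succ_iff.mp (Finset.mem_range.mp hi))
    rw [h1, Finset.sum_sub_distrib, Finset.sum_const, Finset.card_range, ← Finset.mul_sum, ← hS]
    ring
  set big : Fin (2 * n + 3) := ⟨2 * n + 2, by omega⟩ with hbig
  set k : Fin (2 * n + 3) := π.symm big with hkdef
  have key : n + 1 ≤ (k : ℕ) := by
    by_contra hcon
    push_neg at hcon
    have hkn : (k : ℕ) ≤ n := by omega
    set k' : Fin (2 * n + 3) := ⟨(k : ℕ) + 1, by omega⟩ with hk'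
    have hkk' : k ≠ k' := by
      intro h
      have := congrArg Fin.val h
      simp [hk'] at this
    set σ : Equiv.Perm (Fin (2 * n + 3)) := (Equiv.swap k k').trans π with hσ
    have hσval : ∀ j, σ j = π (Equiv.swap k k' j) := fun j => rfl
    have hπk : π k = big := π.apply_symm_apply big
    have hπk' : π k' ≠ big := by
      intro h
      exact hkk' (π.injective (hπk.trans h.symm))
    -- sums are equal for i ≠ k
    have hswap_sums : ∀ (f : ℕ → ℤ) (i : Fin (2 * n + 3)), i ≠ k →
        ∑ j ∈ Finset.Iic i, f ((σ j : ℕ)) = ∑ j ∈ Finset.Iic i, f ((π j : ℕ)) := by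
      intro f i hi
      rcases lt_or_gt_of_ne hi with hlt | hgt
      · apply Finset.sum_congr rfl
        intro j hj
        have hj' : j ≤ i := Finset.mem_Iic.mp hj
        have h1 : j ≠ k := fun h => absurd (h ▸ hj') (not_le.mpr hlt)
        have h2 : j ≠ k' := by
          intro h
          have : (j : ℕ) = (k : ℕ) + 1 := congrArg Fin.val h
          have : (j : ℕ) ≤ (i : ℕ) := hj'
          have : (i : ℕ) < (k : ℕ) := hlt
          omega
        rw [hσval, Equiv.swap_apply_of_ne_of_ne h1 h2]
      · apply Finset.sum_equiv (Equiv.swap k k')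
        · intro j
          simp only [Finset.mem_Iic]
          have hki : (k : ℕ) < (i : ℕ) := hgt
          by_cases h1 : j = k
          · subst h1
            rw [Equiv.swap_apply_left]
            constructor
            · intro _; exact Fin.le_def.mpr (by simp [hk']; omega)
            · intro _; exact le_of_lt hgt
          · by_cases h2 : j = k'
            · subst h2
              rw [Equiv.swap_apply_right]
              constructor
              · intro _; exact le_of_lt hgt
              · intro _; exact Fin.le_def.mpr (by simp [hk']; omega)
            · rw [Equiv.swap_apply_of_ne_of_ne h1 h2]
        · intro j _
          rw [hσval]
    have hM0 : 0 ≤ M := by nlinarith [hB0, Int.natCast_nonneg n]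
    have hfix : ∀ j ∈ Finset.Iio k, σ j = π j := by
      intro j hj
      have hj' : j < k := Finset.mem_Iio.mp hj
      have h1 : j ≠ k := ne_of_lt hj'
      have h2 : j ≠ k' := by
        intro h
        have h3 := congrArg Fin.val h
        have h4 : (j : ℕ) < (k : ℕ) := hj'
        simp [hk'] at h3
        omega
      rw [hσval, Equiv.swap_apply_of_ne_of_ne h1 h2]
    have hknotIio : k ∉ Finset.Iio k := by simp
    have hIic : Finset.Iic k = insert k (Finset.Iio k) := (Finset.Iio_insert k).symm
    have hsum : ∀ f : ℕ → ℤ,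
        (∑ j ∈ Finset.Iic k, f ((σ j : ℕ)) = f ((π k' : ℕ)) + ∑ j ∈ Finset.Iio k, f ((π j : ℕ)))
        ∧ (∑ j ∈ Finset.Iic k, f ((π j : ℕ)) = f ((π k : ℕ)) + ∑ j ∈ Finset.Iio k, f ((π j : ℕ))) := by
      intro f
      rw [hIic, Finset.sum_insert hknotIio, Finset.sum_insert hknotIio]
      constructor
      · congr 1
        · rw [hσval, Equiv.swap_apply_left]
        · exact Finset.sum_congr rfl (fun j hj => by rw [hfix j hj])
      · rfl
    set m : ℕ := ((π k' : Fin (2 * n + 3)) : ℕ) with hmdef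
    have hmlt : m < 2 * n + 2 := by
      have h1 : m < 2 * n + 3 := (π k').isLt
      have h2 : m ≠ 2 * n + 2 := by
        intro h
        exact hπk' (Fin.ext h)
      omega
    obtain ⟨hpm0, hpm2B, hδm⟩ := hjob m hmlt
    have hπkval : ((π k : Fin (2 * n + 3)) : ℕ) = 2 * n + 2 := by rw [hπk]
    set Dp : ℤ := ∑ j ∈ Finset.Iio k, p ((π j : ℕ)) with hDpdef
    set Dδ : ℤ := ∑ j ∈ Finset.Iio k, δ ((π j : ℕ)) with hDδdef
    have hDδ : Dδ ≤ (n : ℤ) * M := by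
      have hterm : ∀ j ∈ Finset.Iio k, δ ((π j : ℕ)) ≤ M := by
        intro j hj
        have hj' : j ≠ k := ne_of_lt (Finset.mem_Iio.mp hj)
        have hne : π j ≠ big := fun h => hj' (π.injective (h.trans hπk.symm))
        have hne2 : ((π j : Fin (2 * n + 3)) : ℕ) ≠ 2 * n + 2 := fun h => hne (Fin.ext h)
        have hlt2 : ((π j : Fin (2 * n + 3)) : ℕ) < 2 * n + 2 := by
          have := (π j).isLt
          omega
        obtain ⟨h0, _, hδe⟩ := hjob _ hlt2
        rw [hδe]; linarith
      calc Dδ ≤ (Finset.Iio k).card • M := Finset.sum_le_card_nsmul _ _ _ hterm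
        _ = ((k : ℕ) : ℤ) * M := by rw [Fin.card_Iio]; simp [nsmul_eq_mul]
        _ ≤ (n : ℤ) * M := by
            apply mul_le_mul_of_nonneg_right _ hM0
            exact_mod_cast hkn
    have c1 : complTime (2 * n + 3) p δ ML0 σ k
        = (p m + Dp) + max 0 ((δ m + Dδ) - ML0) := by
      simp only [complTime]
      rw [(hsum p).1, (hsum δ).1]
    have c2 : complTime (2 * n + 3) p δ ML0 π k
        = ((M - 2 * B) + Dp) + max 0 (Dδ - ML0) := by
      simp only [complTime]
      rw [(hsum p).2, (hsum δ).2, hπkval, hplast, hδlast, zero_add]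
    have hmaxold : max 0 (Dδ - ML0) = 0 := by
      apply max_eq_left
      rw [hML0']
      linarith [hDδ, hS2, hM, hB0]
    have hmaxnew : max 0 ((δ m + Dδ) - ML0) ≤ 2 * S + 2 * B - 2 * p m := by
      apply max_le
      · linarith [hS3, hpm2B]
      · rw [hδm, hML0']
        linarith [hDδ]
    have hstrict : complTime (2 * n + 3) p δ ML0 σ k < complTime (2 * n + 3) p δ ML0 π k := by
      rw [c1, c2, hmaxold]
      have : p m + (2 * S + 2 * B - 2 * p m) < M - 2 * B := by
        linarith [hS2, hM, hpm0, hB0]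
      linarith [hmaxnew]
    have hle : ∀ i : Fin (2 * n + 3),
        complTime (2 * n + 3) p δ ML0 σ i ≤ complTime (2 * n + 3) p δ ML0 π i := by
      intro i
      by_cases h : i = k
      · subst h; exact le_of_lt hstrict
      · apply le_of_eq
        simp only [complTime]
        rw [hswap_sums p i h, hswap_sums δ i h]
    have hlt : totalCompl (2 * n + 3) p δ ML0 σ < totalCompl (2 * n + 3) p δ ML0 π := by
      apply Finset.sum_lt_sum (fun i _ => hle i)
      exact ⟨k, Finset.mem_univ k, hstrict⟩
    exact absurd (hopt σ) (not_le.mpr hlt)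
  refine ⟨?_, key⟩
  have hcard : Finset.univ.filter (fun i : Fin (2 * n + 3) => k < i) = Finset.Ioi k := by
    ext i
    simp [Finset.mem_Ioi]
  rw [hcard, Fin.card_Ioi]
  have := k.isLt
  omega
end

section
/- Let π be an optimal schedule for instance I with total completion time F(π) ≤ Q0 + B, let k = k(π) be its separation index, and let c be the position of the job J_{2n+2} in π. Then exactly one of the following three cases holds: (Case 1) c = n+2 and k = n+3; (Case 2) k = n+2 and c = n+3; (Case 3) k = n+1 and c = n+2. -/
lemma gaussZ (m : ℕ) : 2 * ∑ h ∈ Finset.range m, (h:ℤ) = m * (m-1) := by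
  induction m with
  | zero => simp
  | succ l ih =>
    rw [Finset.sum_range_succ, mul_add]
    push_cast
    push_cast at ih
    rw [ih]; ring

lemma sum_ite_le_card {N : ℕ} (u : ℤ) (s : Finset (Fin N)) (j : Fin N) :
    (∑ x ∈ s, if j ≤ x then u else 0) = u * ((s.filter (fun i => j ≤ i)).card) := by
  rw [← Finset.sum_filter, Finset.sum_const, nsmul_eq_mul, mul_comm]

lemma sum_boole_card {α : Type*} (s : Finset α) (P : α → Prop) [DecidablePred P] :
    (∑ x ∈ s, if P x then (1:ℤ) else 0) = ((s.filter P).card : ℤ) := by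
  rw [← Finset.sum_filter, Finset.sum_const, nsmul_eq_mul, mul_one]

-- counting sum over range
lemma count_range (m i : ℕ) : (∑ v ∈ Finset.range m, if i ≤ v then (1:ℤ) else 0) = ((m - i : ℕ) : ℤ) := by
  rw [sum_boole_card]
  congr 1
  have : (Finset.range m).filter (fun v => i ≤ v) = Finset.Ico i m := by
    ext v; simp [Finset.mem_Ico, Finset.mem_filter]; omega
  rw [this, Nat.card_Ico]

-- inner sums for the q identity
lemma inner_sum_q (n i : ℕ) (hi : i ≤ n) :
    (∑ j ∈ Finset.range (n+1), if i ≤ j then (2*(n:ℤ)+2-2*(j:ℤ)) else 0)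
      = ((n:ℤ)+1-(i:ℤ))*((n:ℤ)+2-(i:ℤ)) := by
  rw [← Finset.sum_filter]
  have h1 : (Finset.range (n+1)).filter (fun j => i ≤ j) = Finset.Ico i (n+1) := by
    ext v; simp [Finset.mem_Ico, Finset.mem_filter]; omega
  rw [h1, Finset.sum_Ico_eq_sum_range]
  have h2 : ∀ l ∈ Finset.range (n+1-i), (2*(n:ℤ)+2-2*((i+l : ℕ):ℤ)) = (2*(n:ℤ)+2-2*(i:ℤ)) - 2*(l:ℕ) := by
    intro l hl; push_cast; ring
  rw [Finset.sum_congr rfl h2, Finset.sum_sub_distrib, Finset.sum_const, ← Finset.mul_sum]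
  have hg := gaussZ (n+1-i)
  have hA : ((n+1-i : ℕ):ℤ) = (n:ℤ)+1-i := by omega
  rw [Finset.card_range, nsmul_eq_mul]
  rw [hA] at hg ⊢
  nlinarith [hg]

lemma inner_sum_T (n i : ℕ) (hi : i ≤ n) :
    (∑ j ∈ Finset.range (n+1), if i ≤ j then (1:ℤ) else 0) = (n:ℤ)+1-(i:ℤ) := by
  rw [count_range]
  omega

lemma core_bound (n c : ℕ) (hc : n+1 ≤ c) (cpos : Fin (2*n+3)) (hcv : (cpos:ℕ) = c)
    (A : Finset (Fin (2*n+3))) (hA : cpos ∉ A) (r : ℕ) (hr1 : 1 ≤ r) (hrn : r ≤ n)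
    (hcard : A.card = 2*r) :
    (r:ℤ)*((r:ℤ)+1) + max 0 ((n:ℤ)+1+(r:ℤ)-(c:ℤ))
      ≤ ∑ j ∈ A, (if (j:ℕ) ≤ n then (n:ℤ)+1-((j:ℕ):ℤ) else ((j:ℕ):ℤ)-(n:ℤ)) := by
  set W : Fin (2*n+3) → ℤ := fun j => if (j:ℕ) ≤ n then (n:ℤ)+1-((j:ℕ):ℤ) else ((j:ℕ):ℤ)-(n:ℤ)
    with hW
  have hW1 : ∀ j : Fin (2*n+3), 1 ≤ W j := by
    intro j
    rw [hW]
    dsimp only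
    split <;> rename_i h
    · omega
    · omega
  -- step: card of level sets
  have hlevel : ∀ h : ℕ, 1 ≤ h → h ≤ r+1 →
      ((A.filter (fun j => W j ≤ (h:ℤ)-1)).card : ℤ) ≤ 2*((h:ℤ)-1) - (if c ≤ n+h-1 then 1 else 0) := by
    intro h h1 h2
    set h' := h - 1 with hh'
    have hW_mem : ∀ j ∈ A.filter (fun j => W j ≤ (h:ℤ)-1), (j:ℕ) ∈ Finset.Icc (n+1-h') (n+h') := by
      intro j hj
      rw [Finset.mem_filter] at hj
      have hWj := hj.2
      rw [hW] at hWj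
      dsimp only at hWj
      rw [Finset.mem_Icc]
      split at hWj <;> rename_i hsp
      · omega
      · have := j.isLt; omega
    have hinj : ∀ j1 ∈ A.filter (fun j => W j ≤ (h:ℤ)-1), ∀ j2 ∈ A.filter (fun j => W j ≤ (h:ℤ)-1),
        (j1:ℕ) = (j2:ℕ) → j1 = j2 := fun j1 _ j2 _ hh => Fin.ext hh
    by_cases hcin : c ≤ n + h'
    · have hmap : ∀ j ∈ A.filter (fun j => W j ≤ (h:ℤ)-1),
          (j:ℕ) ∈ (Finset.Icc (n+1-h') (n+h')).erase c := by
        intro j hj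
        rw [Finset.mem_erase]
        refine ⟨?_, hW_mem j hj⟩
        intro hcon
        have hjc : j = cpos := Fin.ext (by rw [hcv]; exact hcon)
        rw [Finset.mem_filter] at hj
        exact hA (hjc ▸ hj.1)
      have hcard1 := Finset.card_le_card_of_injOn _ hmap hinj
      have hce : c ∈ Finset.Icc (n+1-h') (n+h') := by rw [Finset.mem_Icc]; omega
      rw [Finset.card_erase_of_mem hce, Nat.card_Icc] at hcard1
      have : (n + h' + 1 - (n + 1 - h') - 1) = 2*h' - 1 := by omega
      rw [this] at hcard1
      rw [if_pos (by omega : c ≤ n+h-1)]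
      have : ((A.filter (fun j => W j ≤ (h:ℤ)-1)).card : ℤ) ≤ ((2*h'-1 : ℕ) : ℤ) := by
        exact_mod_cast hcard1
      omega
    · have hcard1 := Finset.card_le_card_of_injOn _ hW_mem hinj
      rw [Nat.card_Icc] at hcard1
      have : (n + h' + 1 - (n + 1 - h')) = 2*h' := by omega
      rw [this] at hcard1
      rw [if_neg (by omega : ¬ c ≤ n+h-1)]
      have : ((A.filter (fun j => W j ≤ (h:ℤ)-1)).card : ℤ) ≤ ((2*h' : ℕ) : ℤ) := by
        exact_mod_cast hcard1
      omega
  -- per-j indicator bound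
  have hperj : ∀ j ∈ A, (∑ h ∈ Finset.Icc 1 (r+1), if ((h:ℕ):ℤ) ≤ W j then (1:ℤ) else 0) ≤ W j := by
    intro j _
    rw [sum_boole_card]
    have hsub : (Finset.Icc 1 (r+1)).filter (fun h => ((h:ℕ):ℤ) ≤ W j)
        ⊆ Finset.Icc 1 ((W j).toNat) := by
      intro h hh
      rw [Finset.mem_filter, Finset.mem_Icc] at hh
      rw [Finset.mem_Icc]
      refine ⟨hh.1.1, ?_⟩
      have := hh.2
      omega
    have := Finset.card_le_card hsub
    rw [Nat.card_Icc] at this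
    have h1 := hW1 j
    omega
  -- assemble
  have hstep : ∑ h ∈ Finset.Icc 1 (r+1), ((2*(r:ℤ) - (2*((h:ℤ)-1) - (if c ≤ n+h-1 then 1 else 0))))
      ≤ ∑ j ∈ A, W j := by
    have hsw : ∑ j ∈ A, (∑ h ∈ Finset.Icc 1 (r+1), if ((h:ℕ):ℤ) ≤ W j then (1:ℤ) else 0)
        = ∑ h ∈ Finset.Icc 1 (r+1), ∑ j ∈ A, (if ((h:ℕ):ℤ) ≤ W j then (1:ℤ) else 0) :=
      Finset.sum_comm
    have hin : ∀ h ∈ Finset.Icc 1 (r+1),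
        2*(r:ℤ) - (2*((h:ℤ)-1) - (if c ≤ n+h-1 then 1 else 0))
          ≤ ∑ j ∈ A, (if ((h:ℕ):ℤ) ≤ W j then (1:ℤ) else 0) := by
      intro h hh
      rw [Finset.mem_Icc] at hh
      rw [sum_boole_card]
      have hsplit : (A.filter (fun j => ((h:ℕ):ℤ) ≤ W j)).card
          + (A.filter (fun j => ¬ ((h:ℕ):ℤ) ≤ W j)).card = A.card :=
        Finset.card_filter_add_card_filter_not _
      have heqf : A.filter (fun j => ¬ ((h:ℕ):ℤ) ≤ W j) = A.filter (fun j => W j ≤ (h:ℤ)-1) := by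
        apply Finset.filter_congr
        intro j _
        constructor
        · intro hx; omega
        · intro hx; omega
      rw [heqf] at hsplit
      have hl := hlevel h hh.1 hh.2
      have : ((A.filter (fun j => ((h:ℕ):ℤ) ≤ W j)).card : ℤ)
          = (A.card : ℤ) - ((A.filter (fun j => W j ≤ (h:ℤ)-1)).card : ℤ) := by
        omega
      rw [this, hcard]
      push_cast
      omega
    calc ∑ h ∈ Finset.Icc 1 (r+1), ((2*(r:ℤ) - (2*((h:ℤ)-1) - (if c ≤ n+h-1 then 1 else 0))))
        ≤ ∑ h ∈ Finset.Icc 1 (r+1), ∑ j ∈ A, (if ((h:ℕ):ℤ) ≤ W j then (1:ℤ) else 0) :=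
          Finset.sum_le_sum hin
      _ = ∑ j ∈ A, (∑ h ∈ Finset.Icc 1 (r+1), if ((h:ℕ):ℤ) ≤ W j then (1:ℤ) else 0) := hsw.symm
      _ ≤ ∑ j ∈ A, W j := Finset.sum_le_sum hperj
  -- evaluate LHS of hstep
  have heval1 : ∑ h ∈ Finset.Icc 1 (r+1), (2*(r:ℤ) - 2*((h:ℤ)-1)) = (r:ℤ)*((r:ℤ)+1) := by
    have h1 : Finset.Icc 1 (r+1) = Finset.Ico 1 (r+2) := by
      ext v; simp [Finset.mem_Icc, Finset.mem_Ico]; omega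
    rw [h1, Finset.sum_Ico_eq_sum_range]
    have h2 : ∀ l ∈ Finset.range (r+2-1), (2*(r:ℤ) - 2*(((1+l : ℕ):ℤ)-1)) = 2*(r:ℤ) - 2*(l:ℤ) := by
      intro l _; push_cast; ring
    rw [Finset.sum_congr rfl h2, Finset.sum_sub_distrib, Finset.sum_const, ← Finset.mul_sum]
    have : r+2-1 = r+1 := by omega
    rw [this, Finset.card_range, nsmul_eq_mul]
    have hg := gaussZ (r+1)
    push_cast at hg ⊢
    nlinarith [hg]
  have heval2 : max 0 ((n:ℤ)+1+(r:ℤ)-(c:ℤ))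
      ≤ ∑ h ∈ Finset.Icc 1 (r+1), (if c ≤ n+h-1 then (1:ℤ) else 0) := by
    rcases le_or_gt ((n:ℤ)+1+(r:ℤ)-(c:ℤ)) 0 with hle | hlt
    · rw [max_eq_left hle]
      apply Finset.sum_nonneg
      intro h _
      split <;> norm_num
    · rw [max_eq_right (le_of_lt hlt)]
      have hcn : c ≤ n + r := by omega
      rw [sum_boole_card]
      have : (Finset.Icc 1 (r+1)).filter (fun h => c ≤ n+h-1) = Finset.Icc (c+1-n) (r+1) := by
        ext v; simp only [Finset.mem_filter, Finset.mem_Icc]; omega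
      rw [this, Nat.card_Icc]
      have : r + 1 + 1 - (c + 1 - n) = n + 1 + r - c := by omega
      rw [this]
      omega
  have hsplitsum : ∑ h ∈ Finset.Icc 1 (r+1), ((2*(r:ℤ) - (2*((h:ℤ)-1) - (if c ≤ n+h-1 then 1 else 0))))
      = (∑ h ∈ Finset.Icc 1 (r+1), (2*(r:ℤ) - 2*((h:ℤ)-1)))
        + ∑ h ∈ Finset.Icc 1 (r+1), (if c ≤ n+h-1 then (1:ℤ) else 0) := by
    rw [← Finset.sum_add_distrib]
    apply Finset.sum_congr rfl
    intro h _
    ring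
  rw [hsplitsum, heval1] at hstep
  have := heval2
  calc (r:ℤ)*((r:ℤ)+1) + max 0 ((n:ℤ)+1+(r:ℤ)-(c:ℤ))
      ≤ (r:ℤ)*((r:ℤ)+1) + ∑ h ∈ Finset.Icc 1 (r+1), (if c ≤ n+h-1 then (1:ℤ) else 0) := by linarith
    _ ≤ ∑ j ∈ A, W j := hstep

lemma sum_ite_le_card' {N : ℕ} (u : ℤ) (s : Finset (Fin N)) (j : Fin N) :
    (∑ x ∈ s, if j ≤ x then u else 0) = u * ((s.filter (fun i => j ≤ i)).card) := by
  rw [← Finset.sum_filter, Finset.sum_const, nsmul_eq_mul, mul_comm]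

set_option maxHeartbeats 2000000 in
lemma master_formula (n : ℕ) (B M T ML0 Q0 QS SJ : ℤ) (p δ : ℕ → ℤ)
    (π : Equiv.Perm (Fin (2*n+3))) (cpos k : Fin (2*n+3)) (c : ℕ)
    (hcv : (cpos:ℕ) = c)
    (hδc : δ ((π cpos : ℕ)) = 0) (hpc : p ((π cpos : ℕ)) = M - 2*B)
    (hsm : ∀ j : Fin (2*n+3), j ≠ cpos → δ ((π j:ℕ)) = M - 2 * p ((π j:ℕ)))
    (hov : ∀ i : Fin (2*n+3), max 0 ((∑ j ∈ Finset.Iic i, δ ((π j : ℕ))) - ML0)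
      = if k ≤ i then (∑ j ∈ Finset.Iic i, δ ((π j : ℕ))) - ML0 else 0)
    (hML0v : ML0 = ((n:ℤ)+1)*M - 2*T - 2*B)
    (h2T : ∑ j ∈ Finset.univ.erase cpos, p ((π j:ℕ)) = 2*T)
    (hQ0v : Q0 = ((n:ℤ)+2)*M + M*SJ + QS)
    (hSJ : 2*SJ = ((n:ℤ)+1)*((n:ℤ)+2))
    (hkc : (k:ℕ) < c) (hkor : (k:ℕ) = n ∨ (k:ℕ) = n+1) (hcN : c < 2*n+3) :
    totalCompl (2*n+3) p δ ML0 π - (Q0 + B)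
      = (∑ j ∈ Finset.univ.erase cpos, p ((π j:ℕ)) *
          (if (j:ℕ) ≤ (k:ℕ) then ((k:ℕ):ℤ) - ((j:ℕ):ℤ) else ((j:ℕ):ℤ) - ((k:ℕ):ℤ)))
        + 2*B*((c:ℤ) - ((k:ℕ):ℤ)) - B - QS := by
  have hkN : (k:ℕ) < 2*n+3 := k.isLt
  set Sv : Fin (2*n+3) → ℤ := fun i => ∑ j ∈ Finset.univ.erase cpos, (if j ≤ i then p ((π j:ℕ)) else 0)
    with hSv
  -- iic sums as univ sums
  have hIicU : ∀ (f : Fin (2*n+3) → ℤ) (i : Fin (2*n+3)),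
      (∑ j ∈ Finset.Iic i, f j) = ∑ j ∈ Finset.univ, (if j ≤ i then f j else 0) := by
    intro f i
    rw [← Finset.sum_filter]
    congr 1
    ext j
    simp [Finset.mem_Iic]
  have hPv : ∀ i, (∑ j ∈ Finset.Iic i, p ((π j:ℕ)))
      = Sv i + (if cpos ≤ i then M - 2*B else 0) := by
    intro i
    rw [hIicU (fun j => p ((π j:ℕ))) i, ← Finset.add_sum_erase _ _ (Finset.mem_univ cpos), hpc,
      hSv]
    ring
  have hDv : ∀ i, (∑ j ∈ Finset.Iic i, δ ((π j:ℕ)))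
      = M * (∑ j ∈ Finset.univ.erase cpos, (if j ≤ i then (1:ℤ) else 0)) - 2 * Sv i := by
    intro i
    rw [hIicU (fun j => δ ((π j:ℕ))) i, ← Finset.add_sum_erase _ _ (Finset.mem_univ cpos), hδc]
    have h2 : ∀ j ∈ Finset.univ.erase cpos, (if j ≤ i then δ ((π j:ℕ)) else 0)
        = M * (if j ≤ i then (1:ℤ) else 0) - 2 * (if j ≤ i then p ((π j:ℕ)) else 0) := by
      intro j hj
      rw [hsm j (Finset.mem_erase.1 hj).1]
      split <;> ring
    rw [Finset.sum_congr rfl h2, Finset.sum_sub_distrib, ← Finset.mul_sum, ← Finset.mul_sum, hSv]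
    simp
  -- decomposition of F
  have hF0 : totalCompl (2*n+3) p δ ML0 π
      = (∑ i ∈ Finset.univ, Sv i)
        + (M-2*B)*(((Finset.univ.filter (fun i : Fin (2*n+3) => cpos ≤ i)).card : ℤ))
        + (M * (∑ i ∈ Finset.univ.filter (fun i : Fin (2*n+3) => k ≤ i),
            (∑ j ∈ Finset.univ.erase cpos, (if j ≤ i then (1:ℤ) else 0)))
          - 2 * (∑ i ∈ Finset.univ.filter (fun i : Fin (2*n+3) => k ≤ i), Sv i)
          - (((Finset.univ.filter (fun i : Fin (2*n+3) => k ≤ i)).card : ℤ)) * ML0) := by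
    unfold totalCompl complTime
    rw [Finset.sum_add_distrib]
    congr 1
    · -- p-part
      have h1 : ∀ i ∈ Finset.univ, (∑ j ∈ Finset.Iic i, p ((π j:ℕ)))
          = Sv i + (if cpos ≤ i then M - 2*B else 0) := fun i _ => hPv i
      rw [Finset.sum_congr rfl h1, Finset.sum_add_distrib]
      congr 1
      rw [← Finset.sum_filter, Finset.sum_const, nsmul_eq_mul, mul_comm]
    · -- overflow part
      have h1 : ∀ i ∈ Finset.univ, max 0 ((∑ j ∈ Finset.Iic i, δ ((π j : ℕ))) - ML0)
          = if k ≤ i then (∑ j ∈ Finset.Iic i, δ ((π j : ℕ))) - ML0 else 0 := fun i _ => hov i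
      rw [Finset.sum_congr rfl h1, ← Finset.sum_filter]
      have h2 : ∀ i ∈ Finset.univ.filter (fun i : Fin (2*n+3) => k ≤ i),
          (∑ j ∈ Finset.Iic i, δ ((π j : ℕ))) - ML0
          = (M * (∑ j ∈ Finset.univ.erase cpos, (if j ≤ i then (1:ℤ) else 0)) - 2 * Sv i) - ML0 := by
        intro i _
        rw [hDv i]
      rw [Finset.sum_congr rfl h2]
      rw [Finset.sum_sub_distrib, Finset.sum_sub_distrib, Finset.sum_const, ← Finset.mul_sum,
        ← Finset.mul_sum, nsmul_eq_mul, mul_comm ((Finset.univ.filter (fun i : Fin (2*n+3) => k ≤ i)).card : ℤ)]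
  -- cards
  have hcIci : ∀ j : Fin (2*n+3), ((Finset.univ.filter (fun i => j ≤ i)).card : ℤ)
      = 2*(n:ℤ)+3 - ((j:ℕ):ℤ) := by
    intro j
    have h1 : Finset.univ.filter (fun i => j ≤ i) = Finset.Ici j := by
      ext i; simp
    rw [h1, Fin.card_Ici]
    have := j.isLt
    omega
  have hcardc : ((Finset.univ.filter (fun i : Fin (2*n+3) => cpos ≤ i)).card : ℤ)
      = 2*(n:ℤ)+3 - (c:ℤ) := by rw [hcIci cpos, hcv]
  have hcardk : ((Finset.univ.filter (fun i : Fin (2*n+3) => k ≤ i)).card : ℤ)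
      = 2*(n:ℤ)+3 - ((k:ℕ):ℤ) := hcIci k
  have hcIciIci : ∀ j : Fin (2*n+3),
      (((Finset.univ.filter (fun i : Fin (2*n+3) => k ≤ i)).filter (fun i => j ≤ i)).card : ℤ)
      = 2*(n:ℤ)+3 - max (((k:ℕ):ℕ):ℤ) ((j:ℕ):ℤ) := by
    intro j
    rcases le_total j k with h | h
    · have h1 : (Finset.univ.filter (fun i : Fin (2*n+3) => k ≤ i)).filter (fun i => j ≤ i)
          = Finset.univ.filter (fun i : Fin (2*n+3) => k ≤ i) := by
        apply Finset.filter_true_of_mem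
        intro i hi
        rw [Finset.mem_filter] at hi
        exact le_trans h hi.2
      rw [h1, hcardk, max_eq_left (by exact_mod_cast h)]
    · have h1 : (Finset.univ.filter (fun i : Fin (2*n+3) => k ≤ i)).filter (fun i => j ≤ i)
          = Finset.univ.filter (fun i : Fin (2*n+3) => j ≤ i) := by
        ext i
        simp only [Finset.mem_filter, Finset.mem_univ, true_and]
        exact ⟨fun hh => hh.2, fun hh => ⟨le_trans h hh, hh⟩⟩
      rw [h1, hcIci j, max_eq_right (by exact_mod_cast h)]
  -- swapped sums
  have hsw1 : (∑ i ∈ Finset.univ, Sv i)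
      = ∑ j ∈ Finset.univ.erase cpos, p ((π j:ℕ)) * ((Finset.univ.filter (fun i => j ≤ i)).card : ℤ) := by
    rw [hSv, Finset.sum_comm]
    exact Finset.sum_congr rfl (fun j _ => sum_ite_le_card (p ((π j:ℕ))) Finset.univ j)
  have hsw2 : (∑ i ∈ Finset.univ.filter (fun i : Fin (2*n+3) => k ≤ i), Sv i)
      = ∑ j ∈ Finset.univ.erase cpos, p ((π j:ℕ))
          * (((Finset.univ.filter (fun i : Fin (2*n+3) => k ≤ i)).filter (fun i => j ≤ i)).card : ℤ) := by
    rw [hSv, Finset.sum_comm]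
    exact Finset.sum_congr rfl (fun j _ =>
      sum_ite_le_card (p ((π j:ℕ))) (Finset.univ.filter (fun i : Fin (2*n+3) => k ≤ i)) j)
  have hsw3 : (∑ i ∈ Finset.univ.filter (fun i : Fin (2*n+3) => k ≤ i),
        (∑ j ∈ Finset.univ.erase cpos, (if j ≤ i then (1:ℤ) else 0)))
      = ∑ j ∈ Finset.univ.erase cpos,
          (((Finset.univ.filter (fun i : Fin (2*n+3) => k ≤ i)).filter (fun i => j ≤ i)).card : ℤ) := by
    rw [Finset.sum_comm]
    refine Finset.sum_congr rfl (fun j _ => ?_)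
    rw [sum_ite_le_card (1:ℤ), one_mul]
  -- per-j combination for p-sums
  have hcomb : (∑ i ∈ Finset.univ, Sv i)
        - 2 * (∑ i ∈ Finset.univ.filter (fun i : Fin (2*n+3) => k ≤ i), Sv i)
      = (∑ j ∈ Finset.univ.erase cpos, p ((π j:ℕ)) *
          (if (j:ℕ) ≤ (k:ℕ) then ((k:ℕ):ℤ) - ((j:ℕ):ℤ) else ((j:ℕ):ℤ) - ((k:ℕ):ℤ)))
        - (2*(n:ℤ)+3 - ((k:ℕ):ℤ)) * (2*T) := by
    have step : ∀ j ∈ Finset.univ.erase cpos,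
        p ((π j:ℕ)) * ((Finset.univ.filter (fun i => j ≤ i)).card : ℤ)
          - 2 * (p ((π j:ℕ)) * (((Finset.univ.filter (fun i : Fin (2*n+3) => k ≤ i)).filter (fun i => j ≤ i)).card : ℤ))
        = p ((π j:ℕ)) * (if (j:ℕ) ≤ (k:ℕ) then ((k:ℕ):ℤ) - ((j:ℕ):ℤ) else ((j:ℕ):ℤ) - ((k:ℕ):ℤ))
          - (2*(n:ℤ)+3 - ((k:ℕ):ℤ)) * (p ((π j:ℕ))) := by
      intro j _
      rw [hcIci j, hcIciIci j]
      rcases le_or_gt ((j:ℕ):ℤ) (((k:ℕ):ℕ):ℤ) with h | h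
      · rw [max_eq_left h, if_pos (by exact_mod_cast h)]
        ring
      · rw [max_eq_right (le_of_lt h), if_neg (by exact_mod_cast not_le.2 h)]
        ring
    calc (∑ i ∈ Finset.univ, Sv i)
          - 2 * (∑ i ∈ Finset.univ.filter (fun i : Fin (2*n+3) => k ≤ i), Sv i)
        = ∑ j ∈ Finset.univ.erase cpos,
            (p ((π j:ℕ)) * ((Finset.univ.filter (fun i => j ≤ i)).card : ℤ)
            - 2 * (p ((π j:ℕ)) * (((Finset.univ.filter (fun i : Fin (2*n+3) => k ≤ i)).filter (fun i => j ≤ i)).card : ℤ))) := by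
          rw [hsw1, hsw2, Finset.mul_sum, ← Finset.sum_sub_distrib]
      _ = ∑ j ∈ Finset.univ.erase cpos,
            (p ((π j:ℕ)) * (if (j:ℕ) ≤ (k:ℕ) then ((k:ℕ):ℤ) - ((j:ℕ):ℤ) else ((j:ℕ):ℤ) - ((k:ℕ):ℤ))
            - (2*(n:ℤ)+3 - ((k:ℕ):ℤ)) * (p ((π j:ℕ)))) := Finset.sum_congr rfl step
      _ = (∑ j ∈ Finset.univ.erase cpos, p ((π j:ℕ)) *
            (if (j:ℕ) ≤ (k:ℕ) then ((k:ℕ):ℤ) - ((j:ℕ):ℤ) else ((j:ℕ):ℤ) - ((k:ℕ):ℤ)))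
          - (2*(n:ℤ)+3 - ((k:ℕ):ℤ)) * (2*T) := by
          rw [Finset.sum_sub_distrib, ← Finset.mul_sum, h2T]
  -- evaluate SC := Σ_j (N - max kn j)
  have hGrange : 2 * (∑ v ∈ Finset.range (2*n+3), ((2*(n:ℤ)+3) - max (((k:ℕ):ℕ):ℤ) ((v:ℕ):ℤ)))
      = 2*((k:ℕ):ℤ)*(2*(n:ℤ)+3-((k:ℕ):ℤ)) + (2*(n:ℤ)+3-((k:ℕ):ℤ))*(2*(n:ℤ)+3-((k:ℕ):ℤ)+1) := by
    rw [Finset.range_eq_Ico, ← Finset.sum_Ico_consecutive _ (Nat.zero_le ((k:ℕ))) (le_of_lt hkN)]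
    have h1 : ∀ v ∈ Finset.Ico 0 ((k:ℕ)), ((2*(n:ℤ)+3) - max (((k:ℕ):ℕ):ℤ) ((v:ℕ):ℤ))
        = (2*(n:ℤ)+3) - ((k:ℕ):ℤ) := by
      intro v hv
      rw [Finset.mem_Ico] at hv
      rw [max_eq_left (by exact_mod_cast le_of_lt hv.2)]
    have h2 : ∀ v ∈ Finset.Ico ((k:ℕ)) (2*n+3), ((2*(n:ℤ)+3) - max (((k:ℕ):ℕ):ℤ) ((v:ℕ):ℤ))
        = (2*(n:ℤ)+3) - ((v:ℕ):ℤ) := by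
      intro v hv
      rw [Finset.mem_Ico] at hv
      rw [max_eq_right (by exact_mod_cast hv.1)]
    rw [Finset.sum_congr rfl h1, Finset.sum_congr rfl h2, Finset.sum_const, Nat.card_Ico,
      Finset.sum_Ico_eq_sum_range]
    have h3 : ∀ l ∈ Finset.range (2*n+3-(k:ℕ)), ((2*(n:ℤ)+3) - (((k:ℕ)+l : ℕ):ℤ))
        = ((2*(n:ℤ)+3) - ((k:ℕ):ℤ)) - (l:ℤ) := by
      intro l _; push_cast; ring
    rw [Finset.sum_congr rfl h3, Finset.sum_sub_distrib, Finset.sum_const, Finset.card_range,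
      Nat.sub_zero]
    have hg := gaussZ (2*n+3-(k:ℕ))
    have hcst : ((2*n+3-(k:ℕ) : ℕ):ℤ) = 2*(n:ℤ)+3-((k:ℕ):ℤ) := by omega
    rw [hcst] at hg
    rw [nsmul_eq_mul, nsmul_eq_mul, hcst]
    have hknz : (((k:ℕ) : ℕ):ℤ) = ((k:ℕ):ℤ) := rfl
    nlinarith [hg]
  have hSC : (∑ j ∈ Finset.univ.erase cpos,
        (((Finset.univ.filter (fun i : Fin (2*n+3) => k ≤ i)).filter (fun i => j ≤ i)).card : ℤ))
      = (∑ v ∈ Finset.range (2*n+3), ((2*(n:ℤ)+3) - max (((k:ℕ):ℕ):ℤ) ((v:ℕ):ℤ)))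
        - (2*(n:ℤ)+3 - (c:ℤ)) := by
    have h1 : (∑ j ∈ Finset.univ.erase cpos,
          (((Finset.univ.filter (fun i : Fin (2*n+3) => k ≤ i)).filter (fun i => j ≤ i)).card : ℤ))
        = ∑ j ∈ Finset.univ.erase cpos, ((2*(n:ℤ)+3) - max (((k:ℕ):ℕ):ℤ) (((j:ℕ):ℕ):ℤ)) :=
      Finset.sum_congr rfl (fun j _ => hcIciIci j)
    rw [h1]
    have h2 : (∑ j : Fin (2*n+3), ((2*(n:ℤ)+3) - max (((k:ℕ):ℕ):ℤ) (((j:ℕ):ℕ):ℤ)))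
        = (∑ v ∈ Finset.range (2*n+3), ((2*(n:ℤ)+3) - max (((k:ℕ):ℕ):ℤ) ((v:ℕ):ℤ))) :=
      Fin.sum_univ_eq_sum_range (fun v => ((2*(n:ℤ)+3) - max (((k:ℕ):ℕ):ℤ) ((v:ℕ):ℤ))) (2*n+3)
    have h3 : max (((k:ℕ):ℕ):ℤ) (((cpos:ℕ):ℕ):ℤ) = (c:ℤ) := by
      rw [hcv]
      exact max_eq_right (by exact_mod_cast le_of_lt hkc)
    rw [← Finset.add_sum_erase _ _ (Finset.mem_univ cpos), h3] at h2
    linarith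
  -- final algebra
  have hNk : ((k:ℕ):ℤ) ≤ (n:ℤ)+1 := by rcases hkor with h | h <;> simp [h]
  set G0 := (∑ v ∈ Finset.range (2*n+3), ((2*(n:ℤ)+3) - max (((k:ℕ):ℕ):ℤ) ((v:ℕ):ℤ))) with hG0
  have hG0v : G0 = (2*(n:ℤ)+3-((k:ℕ):ℤ))*((n:ℤ)+1) + ((n:ℤ)+2) + SJ := by
    apply Int.eq_of_mul_eq_mul_left (by norm_num : (2:ℤ) ≠ 0)
    rcases hkor with h | h
    · have hkz : ((k:ℕ):ℤ) = (n:ℤ) := by exact_mod_cast h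
      rw [hkz] at hGrange ⊢
      linear_combination hGrange - hSJ
    · have hkz : ((k:ℕ):ℤ) = (n:ℤ)+1 := by exact_mod_cast h
      rw [hkz] at hGrange ⊢
      linear_combination hGrange - hSJ
  rw [hF0, hcardc, hcardk, hsw3, hSC, hG0v, hQ0v, hML0v]
  have hrest : (∑ i ∈ Finset.univ, Sv i)
      = ((∑ i ∈ Finset.univ, Sv i)
        - 2 * (∑ i ∈ Finset.univ.filter (fun i : Fin (2*n+3) => k ≤ i), Sv i))
        + 2 * (∑ i ∈ Finset.univ.filter (fun i : Fin (2*n+3) => k ≤ i), Sv i) := by ring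
  rw [hrest, hcomb]
  ring


set_option maxHeartbeats 2000000 in
/-- for an optimal schedule `π` of instance `I` with total completion time
at most `Q0 + B`, with (0-based) separation index `k` and with `c` the (0-based)
position of job `J_{2n+2}`, exactly one of the following holds:
Case 1: `c = n+1 ∧ k = n+2`; Case 2: `k = n+1 ∧ c = n+2`; Case 3: `k = n ∧ c = n+1`
(these are the 1-based cases `c = n+2 ∧ k = n+3`, `k = n+2 ∧ c = n+3`,
`k = n+1 ∧ c = n+2` of the paper). -/
theorem stmt7
    (n : ℕ) (x : ℕ → ℤ) (B M : ℤ)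
    (hx : ∀ i, 1 ≤ i → i ≤ n → 0 < x i)
    (hB : ∑ i ∈ Finset.Icc 1 n, x i = 2 * B)
    (hM : (4 * (n : ℤ) + 8) * B < M)
    (p δ : ℕ → ℤ)
    (hp : ∀ i ≤ n, p i = ∑ j ∈ Finset.Icc 1 i, x j)
    (hp' : ∀ i ≤ n, p (n + 1 + i) = p i)
    (hplast : p (2 * n + 2) = M - 2 * B)
    (hδ : ∀ i ≤ n, δ i = M - 2 * p i)
    (hδ' : ∀ i ≤ n, δ (n + 1 + i) = δ i)
    (hδlast : δ (2 * n + 2) = 0)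
    (ML0 : ℤ) (hML0 : ML0 = (∑ i ∈ Finset.range (n + 1), δ i) - 2 * B)
    (Q0 : ℤ)
    (hQ0 : Q0 = (∑ j ∈ Finset.range (n + 1), ((n : ℤ) - (j : ℤ) + 1) * p j)
      + ((n : ℤ) + 2) * ((∑ j ∈ Finset.range (n + 1), p j) + 2 * B + p (2 * n + 2))
      + (∑ j ∈ Finset.range (n + 1), ((j : ℤ) + 1) * (p j + δ j)))
    (π : Equiv.Perm (Fin (2 * n + 3)))
    (hopt : ∀ σ : Equiv.Perm (Fin (2 * n + 3)),
      totalCompl (2 * n + 3) p δ ML0 π ≤ totalCompl (2 * n + 3) p δ ML0 σ)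
    (hQ : totalCompl (2 * n + 3) p δ ML0 π ≤ Q0 + B)
    (k : Fin (2 * n + 3))
    (hk : ML0 < ∑ j ∈ Finset.Iic k, δ ((π j : ℕ)))
    (hkmin : ∀ i : Fin (2 * n + 3), i < k → (∑ j ∈ Finset.Iic i, δ ((π j : ℕ))) ≤ ML0)
    (c : ℕ) (hc : c = ((π.symm ⟨2 * n + 2, by omega⟩ : Fin (2 * n + 3)) : ℕ)) :
    ((c = n + 1 ∧ (k : ℕ) = n + 2) ∧ ¬((k : ℕ) = n + 1 ∧ c = n + 2) ∧
        ¬((k : ℕ) = n ∧ c = n + 1)) ∨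
    (¬(c = n + 1 ∧ (k : ℕ) = n + 2) ∧ ((k : ℕ) = n + 1 ∧ c = n + 2) ∧
        ¬((k : ℕ) = n ∧ c = n + 1)) ∨
    (¬(c = n + 1 ∧ (k : ℕ) = n + 2) ∧ ¬((k : ℕ) = n + 1 ∧ c = n + 2) ∧
        ((k : ℕ) = n ∧ c = n + 1)) := by
  -- ### basic abbreviations
  have hb2 : 2*n+2 < 2*n+3 := by omega
  set bigF : Fin (2*n+3) := ⟨2*n+2, hb2⟩ with hbigF
  set cpos : Fin (2*n+3) := π.symm bigF with hcposdef
  have hcval : c = (cpos : ℕ) := hc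
  have hπcpos : π cpos = bigF := π.apply_symm_apply bigF
  have hcne : ∀ j : Fin (2*n+3), j ≠ cpos → π j ≠ bigF := by
    intro j hj hcon
    exact hj (by rw [hcposdef, ← hcon, Equiv.symm_apply_apply])
  -- ### basic values
  have hp0 : p 0 = 0 := by rw [hp 0 (by omega)]; simp
  have hple : ∀ j ≤ n, p j ≤ 2*B := by
    intro j hj
    rw [hp j hj, ← hB]
    apply Finset.sum_le_sum_of_subset_of_nonneg (Finset.Icc_subset_Icc_right hj)
    intro i hi hni
    simp only [Finset.mem_Icc] at hi
    exact le_of_lt (hx i hi.1 hi.2)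
  have hp0le : ∀ j ≤ n, 0 ≤ p j := by
    intro j hj
    rw [hp j hj]
    apply Finset.sum_nonneg
    intro i hi
    simp only [Finset.mem_Icc] at hi
    exact le_of_lt (hx i hi.1 (le_trans hi.2 hj))
  have hpn : p n = 2*B := by rw [hp n le_rfl, hB]
  have hB0 : 0 ≤ B := by have := hp0le n le_rfl; rw [hpn] at this; linarith
  set T : ℤ := ∑ j ∈ Finset.range (n+1), p j with hTdef
  have hT0 : 0 ≤ T := Finset.sum_nonneg (fun j hj => hp0le j (by simp at hj; omega))
  have hTle : T ≤ 2*n*B := by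
    rw [hTdef, Finset.range_eq_Ico,
      ← Finset.sum_Ico_consecutive _ (by omega : 0 ≤ 1) (by omega : 1 ≤ n+1)]
    have h1 : ∑ j ∈ Finset.Ico 0 1, p j = 0 := by simp [hp0]
    have h2 : ∑ j ∈ Finset.Ico 1 (n+1), p j ≤ ∑ _j ∈ Finset.Ico 1 (n+1), 2*B := by
      apply Finset.sum_le_sum
      intro i hi
      simp only [Finset.mem_Ico] at hi
      exact hple i (by omega)
    rw [Finset.sum_const] at h2
    simp only [Nat.card_Ico] at h2
    rw [h1]
    calc (0:ℤ) + ∑ j ∈ Finset.Ico 1 (n+1), p j ≤ 0 + (n+1-1) • (2*B) := by linarith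
      _ = 2*n*B := by push_cast; ring
  have hML0v : ML0 = ((n:ℤ)+1)*M - 2*T - 2*B := by
    rw [hML0, hTdef]
    have he : ∑ i ∈ Finset.range (n + 1), δ i = ∑ i ∈ Finset.range (n+1), (M - 2 * p i) := by
      apply Finset.sum_congr rfl
      intro i hi; simp only [Finset.mem_range] at hi; exact hδ i (by omega)
    rw [he, Finset.sum_sub_distrib, Finset.sum_const, ← Finset.mul_sum, Finset.card_range]
    push_cast
    ring
  have hM0 : 0 < M := lt_of_le_of_lt (by positivity) hM
  have hsmall : ∀ m : Fin (2*n+3), m ≠ bigF →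
      δ (m:ℕ) = M - 2 * p (m:ℕ) ∧ 0 ≤ p (m:ℕ) ∧ p (m:ℕ) ≤ 2*B := by
    intro m hm
    have hmv : (m:ℕ) ≠ 2*n+2 := by
      intro hcon
      exact hm (Fin.ext hcon)
    have hmlt : (m:ℕ) < 2*n+3 := m.isLt
    by_cases hmn : (m:ℕ) ≤ n
    · exact ⟨hδ _ hmn, hp0le _ hmn, hple _ hmn⟩
    · have hi : (m:ℕ) = n + 1 + ((m:ℕ) - (n+1)) := by omega
      have hile : (m:ℕ) - (n+1) ≤ n := by omega
      rw [hi, hp' _ hile, hδ' _ hile]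
      exact ⟨hδ _ hile, hp0le _ hile, hple _ hile⟩
  have hδbig : δ (bigF:ℕ) = 0 := hδlast
  have hpbig : p (bigF:ℕ) = M - 2*B := hplast
  have hδ0 : ∀ m : Fin (2*n+3), 0 ≤ δ (m:ℕ) := by
    intro m
    by_cases hm : m = bigF
    · rw [hm, hδbig]
    · obtain ⟨h1, h2, h3⟩ := hsmall m hm; rw [h1]; linarith
  have hδM : ∀ m : Fin (2*n+3), δ (m:ℕ) ≤ M := by
    intro m
    by_cases hm : m = bigF
    · rw [hm, hδbig]; linarith
    · obtain ⟨h1, h2, h3⟩ := hsmall m hm; rw [h1]; linarith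
  -- ### overflow structure
  have hDmono : ∀ i i' : Fin (2*n+3), i ≤ i' →
      (∑ j ∈ Finset.Iic i, δ ((π j : ℕ))) ≤ ∑ j ∈ Finset.Iic i', δ ((π j : ℕ)) := by
    intro i i' hii
    exact Finset.sum_le_sum_of_subset_of_nonneg (Finset.Iic_subset_Iic.2 hii)
      (fun j _ _ => hδ0 (π j))
  have hov : ∀ i : Fin (2*n+3), max 0 ((∑ j ∈ Finset.Iic i, δ ((π j : ℕ))) - ML0)
      = if k ≤ i then (∑ j ∈ Finset.Iic i, δ ((π j : ℕ))) - ML0 else 0 := by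
    intro i
    by_cases hki : k ≤ i
    · rw [if_pos hki]
      exact max_eq_right (by have := hDmono k i hki; linarith)
    · rw [if_neg hki]
      exact max_eq_left (by have := hkmin i (lt_of_not_ge hki); linarith)
  -- ### step P1 : n+1 ≤ c
  have hcge : n+1 ≤ c := by
    by_contra hcon
    push_neg at hcon
    have hcn : c ≤ n := by omega
    have hblt : c+1 < 2*n+3 := by omega
    set b : Fin (2*n+3) := ⟨c+1, hblt⟩ with hbdef
    have hcposv : (cpos : ℕ) = c := hcval.symm
    have hcb : cpos < b := by
      rw [Fin.lt_def, hcposv]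
      exact Nat.lt_succ_self c
    have hbne : b ≠ cpos := ne_of_gt hcb
    set σ : Equiv.Perm (Fin (2*n+3)) := (Equiv.swap cpos b).trans π with hσdef
    have hσc : σ cpos = π b := by
      simp [hσdef, Equiv.swap_apply_left]
    have hσo : ∀ j, j ≠ cpos → j ≠ b → σ j = π j := by
      intro j h1 h2
      simp [hσdef, Equiv.swap_apply_of_ne_of_ne h1 h2]
    have hpre : ∀ (f : ℕ → ℤ) (i : Fin (2*n+3)), i ≠ cpos →
        ∑ j ∈ Finset.Iic i, f ((σ j : ℕ)) = ∑ j ∈ Finset.Iic i, f ((π j : ℕ)) := by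
      intro f i hi
      by_cases hlt : i < cpos
      · apply Finset.sum_congr rfl
        intro j hj
        simp only [Finset.mem_Iic] at hj
        have h1 : j ≠ cpos := ne_of_lt (lt_of_le_of_lt hj hlt)
        have h2 : j ≠ b := ne_of_lt (lt_trans (lt_of_le_of_lt hj hlt) hcb)
        rw [hσo j h1 h2]
      · have hci : cpos < i := lt_of_le_of_ne (le_of_not_gt hlt) (Ne.symm hi)
        have hbi : b ≤ i := by
          rw [Fin.lt_def, hcposv] at hci
          exact hci
        have hmem : ∀ j : Fin (2*n+3), j ≤ i ↔ (Equiv.swap cpos b j) ≤ i := by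
          intro j
          rcases eq_or_ne j cpos with rfl | h1
          · rw [Equiv.swap_apply_left]
            exact iff_of_true (le_of_lt hci) hbi
          rcases eq_or_ne j b with rfl | h2
          · rw [Equiv.swap_apply_right]
            exact iff_of_true hbi (le_of_lt hci)
          · rw [Equiv.swap_apply_of_ne_of_ne h1 h2]
        refine Finset.sum_equiv (Equiv.swap cpos b) ?_ ?_
        · intro j
          simp only [Finset.mem_Iic]
          exact hmem j
        · intro j hj
          have : σ j = π (Equiv.swap cpos b j) := rfl
          rw [this]
    have htot : totalCompl (2*n+3) p δ ML0 σ - totalCompl (2*n+3) p δ ML0 π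
        = complTime (2*n+3) p δ ML0 σ cpos - complTime (2*n+3) p δ ML0 π cpos := by
      unfold totalCompl
      rw [← Finset.add_sum_erase _ _ (Finset.mem_univ cpos),
        ← Finset.add_sum_erase _ (fun i => complTime (2*n+3) p δ ML0 π i) (Finset.mem_univ cpos)]
      have heq : ∑ i ∈ Finset.univ.erase cpos, complTime (2*n+3) p δ ML0 σ i
          = ∑ i ∈ Finset.univ.erase cpos, complTime (2*n+3) p δ ML0 π i := by
        apply Finset.sum_congr rfl
        intro i hi
        have hine : i ≠ cpos := (Finset.mem_erase.1 hi).1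
        unfold complTime
        rw [hpre p i hine, hpre δ i hine]
      rw [heq]
      ring
    have hIic : Finset.Iic cpos = insert cpos (Finset.Iio cpos) := (Finset.Iio_insert cpos).symm
    have hcnotin : cpos ∉ Finset.Iio cpos := by simp
    have hsums : ∀ f : ℕ → ℤ, ∑ j ∈ Finset.Iic cpos, f ((σ j : ℕ))
        = f ((π b : ℕ)) + ∑ j ∈ Finset.Iio cpos, f ((π j : ℕ)) := by
      intro f
      rw [hIic, Finset.sum_insert hcnotin, hσc]
      congr 1
      apply Finset.sum_congr rfl
      intro j hj
      simp only [Finset.mem_Iio] at hj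
      rw [hσo j (ne_of_lt hj) (ne_of_lt (lt_trans hj hcb))]
    have hsumπ : ∀ f : ℕ → ℤ, ∑ j ∈ Finset.Iic cpos, f ((π j : ℕ))
        = f ((bigF : ℕ)) + ∑ j ∈ Finset.Iio cpos, f ((π j : ℕ)) := by
      intro f
      rw [hIic, Finset.sum_insert hcnotin, hπcpos]
    have hπbne : π b ≠ bigF := hcne b hbne
    obtain ⟨hd1, hd2, hd3⟩ := hsmall (π b) hπbne
    have hDio : ∑ j ∈ Finset.Iio cpos, δ ((π j:ℕ)) ≤ (c:ℤ) * M := by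
      have h1 : ∑ j ∈ Finset.Iio cpos, δ ((π j:ℕ)) ≤ ∑ _j ∈ Finset.Iio cpos, M :=
        Finset.sum_le_sum (fun j _ => hδM (π j))
      rw [Finset.sum_const, Fin.card_Iio, hcposv, nsmul_eq_mul] at h1
      exact h1
    have h0 := hopt σ
    have hdiff : totalCompl (2*n+3) p δ ML0 σ - totalCompl (2*n+3) p δ ML0 π
        = (p ((π b:ℕ)) - (M - 2*B)) + (max 0 ((∑ j ∈ Finset.Iio cpos, δ ((π j:ℕ))) + δ ((π b:ℕ)) - ML0)
            - max 0 ((∑ j ∈ Finset.Iio cpos, δ ((π j:ℕ))) - ML0)) := by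
      rw [htot]
      unfold complTime
      rw [hsums p, hsums δ, hsumπ p, hsumπ δ, hδbig, hpbig]
      ring_nf
    have hmax1 : max 0 ((∑ j ∈ Finset.Iio cpos, δ ((π j:ℕ))) + δ ((π b:ℕ)) - ML0) ≤ 2*T + 2*B := by
      apply max_le (by linarith)
      have hδb : δ ((π b:ℕ)) ≤ M := hδM (π b)
      have hcZ : (c:ℤ) ≤ n := by exact_mod_cast hcn
      have hcM : (c:ℤ) * M ≤ (n:ℤ) * M := mul_le_mul_of_nonneg_right hcZ (le_of_lt hM0)
      rw [hML0v]
      linarith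
    have hmax2 : (0:ℤ) ≤ max 0 ((∑ j ∈ Finset.Iio cpos, δ ((π j:ℕ))) - ML0) := le_max_left _ _
    have h0' : (0:ℤ) ≤ totalCompl (2*n+3) p δ ML0 σ - totalCompl (2*n+3) p δ ML0 π :=
      sub_nonneg.2 h0
    rw [hdiff] at h0'
    have hfin : M ≤ (4*(n:ℤ)+6)*B := by linarith [hmax1, hmax2, hd3, hTle]
    have hnn : (0:ℤ) ≤ (n:ℤ) := Int.natCast_nonneg n
    nlinarith [hB0, hM, hfin]
  -- ### step P2 : range of k, c ≠ k, k = n+2 → c = n+1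
  have hMB4 : 0 ≤ M - 4*B := by nlinarith [Int.natCast_nonneg n, hB0, hM]
  have hlower : ∀ i : Fin (2*n+3), (((Finset.Iic i).erase cpos).card : ℤ) * (M - 4*B)
      ≤ ∑ j ∈ Finset.Iic i, δ ((π j:ℕ)) := by
    intro i
    have h1 : ∑ j ∈ (Finset.Iic i).erase cpos, δ ((π j:ℕ)) ≤ ∑ j ∈ Finset.Iic i, δ ((π j:ℕ)) :=
      Finset.sum_le_sum_of_subset_of_nonneg (Finset.erase_subset _ _) (fun j _ _ => hδ0 (π j))
    have h2 : ((Finset.Iic i).erase cpos).card • (M - 4*B)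
        ≤ ∑ j ∈ (Finset.Iic i).erase cpos, δ ((π j:ℕ)) := by
      apply Finset.card_nsmul_le_sum
      intro j hj
      obtain ⟨hd1, hd2, hd3⟩ := hsmall (π j) (hcne j (Finset.mem_erase.1 hj).1)
      rw [hd1]; linarith
    rw [nsmul_eq_mul] at h2
    linarith
  have hcard_er : ∀ i : Fin (2*n+3), (i:ℕ) ≤ ((Finset.Iic i).erase cpos).card := by
    intro i
    by_cases hmem : cpos ∈ Finset.Iic i
    · rw [Finset.card_erase_of_mem hmem, Fin.card_Iic]; omega
    · rw [Finset.erase_eq_of_notMem hmem, Fin.card_Iic]; omega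
  have hlower' : ∀ i : Fin (2*n+3), ((i:ℕ) : ℤ) * (M - 4*B) ≤ ∑ j ∈ Finset.Iic i, δ ((π j:ℕ)) := by
    intro i
    refine le_trans ?_ (hlower i)
    apply mul_le_mul_of_nonneg_right _ hMB4
    exact_mod_cast hcard_er i
  have hkgen : n ≤ (k:ℕ) := by
    by_contra hcon
    push_neg at hcon
    have hDk : ∑ j ∈ Finset.Iic k, δ ((π j:ℕ)) ≤ (((k:ℕ):ℤ)+1) * M := by
      have h1 : ∑ j ∈ Finset.Iic k, δ ((π j:ℕ)) ≤ ∑ _j ∈ Finset.Iic k, M :=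
        Finset.sum_le_sum (fun j _ => hδM (π j))
      rw [Finset.sum_const, Fin.card_Iic, nsmul_eq_mul] at h1
      refine le_trans h1 (le_of_eq ?_)
      push_cast
      ring
    have hknZ : ((k:ℕ):ℤ)+1 ≤ (n:ℤ) := by exact_mod_cast hcon
    have hmul : (((k:ℕ):ℤ)+1) * M ≤ (n:ℤ) * M := mul_le_mul_of_nonneg_right hknZ (le_of_lt hM0)
    rw [hML0v] at hk
    nlinarith [hTle, hB0, hM, hT0]
  have hkle : (k:ℕ) ≤ n+2 := by
    by_contra hcon
    push_neg at hcon
    have hi0lt : n+2 < 2*n+3 := by omega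
    set i0 : Fin (2*n+3) := ⟨n+2, hi0lt⟩ with hi0def
    have hi0k : i0 < k := by rw [Fin.lt_def]; exact hcon
    have hup := hkmin i0 hi0k
    have hlo := hlower' i0
    have hi0v : ((i0:ℕ):ℤ) = (n:ℤ)+2 := by rw [hi0def]; push_cast; ring
    rw [hi0v] at hlo
    rw [hML0v] at hup
    nlinarith [hT0, hB0, hM, Int.natCast_nonneg n]
  have hcnek : c ≠ (k:ℕ) := by
    intro heq
    have hck : cpos = k := Fin.ext (by rw [← hcval]; exact heq)
    have hπk : π k = bigF := by rw [← hck]; exact hπcpos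
    have hIick : Finset.Iic k = insert k (Finset.Iio k) := (Finset.Iio_insert k).symm
    have hDk : ∑ j ∈ Finset.Iic k, δ ((π j:ℕ)) = ∑ j ∈ Finset.Iio k, δ ((π j:ℕ)) := by
      rw [hIick, Finset.sum_insert (by simp), hπk, hδbig]
      ring
    have hML0pos : 0 < ML0 := by
      rw [hML0v]
      nlinarith [hTle, hB0, hM, Int.natCast_nonneg n]
    have hIio_le : ∑ j ∈ Finset.Iio k, δ ((π j:ℕ)) ≤ ML0 := by
      by_cases hk0 : (k:ℕ) = 0
      · have : Finset.Iio k = ∅ := by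
          ext j
          simp only [Finset.mem_Iio, Finset.notMem_empty, iff_false]
          rw [Fin.lt_def, hk0]
          omega
        rw [this, Finset.sum_empty]
        linarith
      · have hklt : (k:ℕ)-1 < 2*n+3 := by omega
        set k' : Fin (2*n+3) := ⟨(k:ℕ)-1, hklt⟩ with hk'def
        have h1 : Finset.Iio k = Finset.Iic k' := by
          ext j
          simp only [Finset.mem_Iio, Finset.mem_Iic]
          rw [Fin.lt_def, Fin.le_def, hk'def]
          simp only []
          omega
        have h2 : k' < k := by rw [Fin.lt_def, hk'def]; simp only []; omega
        rw [h1]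
        exact hkmin k' h2
    rw [hDk] at hk
    linarith
  have hk2c : (k:ℕ) = n+2 → c = n+1 := by
    intro hkv
    by_contra hcon
    have hc3 : n+3 ≤ c := by
      rcases Nat.lt_or_ge c (n+3) with h | h
      · exfalso
        rcases Nat.lt_or_ge c (n+2) with h2 | h2
        · exact hcon (by omega)
        · exact hcnek (by omega)
      · exact h
    have hi1lt : n+1 < 2*n+3 := by omega
    set i1 : Fin (2*n+3) := ⟨n+1, hi1lt⟩ with hi1def
    have hi1k : i1 < k := by rw [Fin.lt_def, hkv]; exact Nat.lt_succ_self (n+1)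
    have hup := hkmin i1 hi1k
    have hnomem : cpos ∉ Finset.Iic i1 := by
      simp only [Finset.mem_Iic]
      rw [Fin.le_def, hi1def]
      simp only []
      rw [← hcval]
      omega
    have hcarde : ((Finset.Iic i1).erase cpos).card = n+2 := by
      rw [Finset.erase_eq_of_notMem hnomem, Fin.card_Iic]
    have hlo := hlower i1
    rw [hcarde] at hlo
    rw [hML0v] at hup
    have : ((n:ℤ)+2) * (M - 4*B) ≤ (↑n + 1) * M - 2 * T - 2 * B := by
      refine le_trans (le_of_eq ?_) (le_trans hlo hup)
      push_cast
      ring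
    nlinarith [hT0, hB0, hM, Int.natCast_nonneg n]
  -- ### job-sum machinery
  have hbijg : ∀ g : ℕ → ℤ, ∑ j ∈ Finset.univ.erase cpos, g ((π j:ℕ))
      = ∑ m ∈ Finset.univ.erase bigF, g ((m:ℕ)) := by
    intro g
    apply Finset.sum_bij (fun (j : Fin (2*n+3)) (_ : j ∈ Finset.univ.erase cpos) => π j)
    · intro a ha
      rw [Finset.mem_erase] at ha ⊢
      exact ⟨hcne a ha.1, Finset.mem_univ _⟩
    · intro a _ b _ hab
      exact π.injective hab
    · intro m hm
      rw [Finset.mem_erase] at hm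
      refine ⟨π.symm m, ?_, π.apply_symm_apply m⟩
      rw [Finset.mem_erase]
      refine ⟨?_, Finset.mem_univ _⟩
      intro hcon
      apply hm.1
      rw [← π.apply_symm_apply m, hcon, hπcpos]
    · intro a _
      rfl
  have herase_range : ∀ g : ℕ → ℤ, ∑ m ∈ Finset.univ.erase bigF, g ((m:ℕ))
      = ∑ v ∈ Finset.range (2*n+2), g v := by
    intro g
    have h1 : ∑ m ∈ Finset.univ.erase bigF, g ((m:ℕ))
        = ∑ m ∈ Finset.univ.erase bigF, (if (m:ℕ) ≠ 2*n+2 then g (m:ℕ) else 0) := by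
      apply Finset.sum_congr rfl
      intro m hm
      rw [Finset.mem_erase] at hm
      rw [if_pos (fun hcon => hm.1 (Fin.ext hcon))]
    rw [h1]
    have h2 : ∑ m ∈ Finset.univ.erase bigF, (if (m:ℕ) ≠ 2*n+2 then g (m:ℕ) else 0)
        = ∑ m : Fin (2*n+3), (if (m:ℕ) ≠ 2*n+2 then g (m:ℕ) else 0) := by
      rw [← Finset.add_sum_erase _ (fun m : Fin (2*n+3) => if (m:ℕ) ≠ 2*n+2 then g (m:ℕ) else 0)
        (Finset.mem_univ bigF)]
      have h3 : (if ((bigF:ℕ)) ≠ 2*n+2 then g ((bigF:ℕ)) else 0) = 0 := by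
        rw [if_neg]
        simp [hbigF]
      rw [h3, zero_add]
    rw [h2, Fin.sum_univ_eq_sum_range (fun v => if v ≠ 2*n+2 then g v else 0) (2*n+3),
      Finset.sum_range_succ]
    have h3 : (if (2*n+2) ≠ 2*n+2 then g (2*n+2) else 0) = 0 := by simp
    rw [h3, add_zero]
    apply Finset.sum_congr rfl
    intro v hv
    rw [Finset.mem_range] at hv
    rw [if_pos (by omega)]
  have hsplit2 : ∀ g : ℕ → ℤ, (∀ l ≤ n, g (n+1+l) = g l) →
      ∑ v ∈ Finset.range (2*n+2), g v = 2 * ∑ v ∈ Finset.range (n+1), g v := by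
    intro g hg
    rw [Finset.range_eq_Ico, ← Finset.sum_Ico_consecutive _ (by omega : 0 ≤ n+1) (by omega : n+1 ≤ 2*n+2)]
    have h1 : ∑ v ∈ Finset.Ico (n+1) (2*n+2), g v = ∑ v ∈ Finset.range (n+1), g v := by
      rw [Finset.sum_Ico_eq_sum_range]
      have he : 2*n+2 - (n+1) = n+1 := by omega
      rw [he]
      apply Finset.sum_congr rfl
      intro l hl
      rw [Finset.mem_range] at hl
      exact hg l (by omega)
    have h0 : Finset.Ico 0 (n+1) = Finset.range (n+1) := by rw [Finset.range_eq_Ico]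
    rw [h1, h0]
    ring
  have h2T : ∑ j ∈ Finset.univ.erase cpos, p ((π j:ℕ)) = 2*T := by
    rw [hbijg p, herase_range p, hsplit2 p hp', hTdef]
  -- ### Q0 decomposition
  set SJ : ℤ := ∑ j ∈ Finset.range (n+1), ((j:ℤ)+1) with hSJdef
  set QS : ℤ := ∑ j ∈ Finset.range (n+1), (2*(n:ℤ)+2-2*(j:ℤ)) * p j with hQSdef
  have hSJv : 2*SJ = ((n:ℤ)+1)*((n:ℤ)+2) := by
    rw [hSJdef]
    have h1 : ∑ j ∈ Finset.range (n+1), ((j:ℤ)+1) = (∑ j ∈ Finset.range (n+1), (j:ℤ)) + (n+1) := by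
      rw [Finset.sum_add_distrib, Finset.sum_const, Finset.card_range, nsmul_eq_mul, mul_one]
      push_cast
      ring
    have hg := gaussZ (n+1)
    rw [h1]
    push_cast at hg ⊢
    linarith
  have hQ0v : Q0 = ((n:ℤ)+2)*M + M*SJ + QS := by
    rw [hQ0, hplast]
    have h3rd : ∑ j ∈ Finset.range (n+1), ((j:ℤ)+1)*(p j + δ j)
        = M*SJ - ∑ j ∈ Finset.range (n+1), ((j:ℤ)+1)*(p j) := by
      rw [hSJdef, Finset.mul_sum, ← Finset.sum_sub_distrib]
      apply Finset.sum_congr rfl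
      intro j hj
      rw [Finset.mem_range] at hj
      rw [hδ j (by omega)]
      ring
    rw [h3rd]
    have hcombq : (∑ j ∈ Finset.range (n+1), ((n:ℤ)-(j:ℤ)+1) * p j) + ((n:ℤ)+2)*T
        - (∑ j ∈ Finset.range (n+1), ((j:ℤ)+1)*(p j)) = QS := by
      rw [hQSdef, hTdef, Finset.mul_sum, ← Finset.sum_add_distrib, ← Finset.sum_sub_distrib]
      apply Finset.sum_congr rfl
      intro j _
      ring
    linear_combination hcombq
  -- ### class representation
  set cls : ℕ → ℕ := fun m => if m ≤ n then m else m - (n+1) with hclsdef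
  have hclsfacts : ∀ m : Fin (2*n+3), m ≠ bigF → cls (m:ℕ) ≤ n ∧ p (m:ℕ) = p (cls (m:ℕ)) := by
    intro m hm
    have hmv : (m:ℕ) ≠ 2*n+2 := fun hcon => hm (Fin.ext hcon)
    have hmlt : (m:ℕ) < 2*n+3 := m.isLt
    rw [hclsdef]
    dsimp only
    by_cases hmn : (m:ℕ) ≤ n
    · rw [if_pos hmn]
      exact ⟨hmn, rfl⟩
    · rw [if_neg hmn]
      have hile : (m:ℕ) - (n+1) ≤ n := by omega
      refine ⟨hile, ?_⟩
      have hi : (m:ℕ) = n + 1 + ((m:ℕ) - (n+1)) := by omega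
      calc p (m:ℕ) = p (n+1+((m:ℕ)-(n+1))) := by rw [← hi]
        _ = p ((m:ℕ)-(n+1)) := hp' _ hile
  have hpx : ∀ j ≤ n, p j = ∑ i ∈ Finset.Icc 1 n, (if i ≤ j then x i else 0) := by
    intro j hj
    rw [hp j hj, ← Finset.sum_filter]
    congr 1
    ext v
    simp only [Finset.mem_filter, Finset.mem_Icc]
    omega
  have hrep : ∀ j : Fin (2*n+3), j ≠ cpos →
      p ((π j:ℕ)) = ∑ i ∈ Finset.Icc 1 n, (if i ≤ cls ((π j:ℕ)) then x i else 0) := by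
    intro j hj
    obtain ⟨h1, h2⟩ := hclsfacts (π j) (hcne j hj)
    rw [h2, hpx _ h1]
  -- ### weighted sum decomposition
  set Wf : Fin (2*n+3) → ℤ :=
    fun j => (if (j:ℕ) ≤ n then (n:ℤ)+1-((j:ℕ):ℤ) else ((j:ℕ):ℤ)-(n:ℤ)) with hWf
  have hSWX : ∑ j ∈ Finset.univ.erase cpos, p ((π j:ℕ)) * Wf j
      = ∑ i ∈ Finset.Icc 1 n, x i *
          (∑ j ∈ (Finset.univ.erase cpos).filter (fun j => i ≤ cls ((π j:ℕ))), Wf j) := by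
    have h1 : ∀ j ∈ Finset.univ.erase cpos, p ((π j:ℕ)) * Wf j
        = ∑ i ∈ Finset.Icc 1 n, (if i ≤ cls ((π j:ℕ)) then x i * Wf j else 0) := by
      intro j hj
      rw [hrep j (Finset.mem_erase.1 hj).1, Finset.sum_mul]
      apply Finset.sum_congr rfl
      intro i _
      rw [ite_mul, zero_mul]
    rw [Finset.sum_congr rfl h1, Finset.sum_comm]
    apply Finset.sum_congr rfl
    intro i _
    rw [← Finset.sum_filter, Finset.mul_sum]
  have hcardA : ∀ i, 1 ≤ i → i ≤ n →
      (((Finset.univ.erase cpos).filter (fun j => i ≤ cls ((π j:ℕ)))).card : ℤ)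
        = 2*((n:ℤ)+1-(i:ℤ)) := by
    intro i hi1 hin
    rw [← sum_boole_card]
    have hg : ∀ l ≤ n, (if i ≤ cls (n+1+l) then (1:ℤ) else 0) = (if i ≤ cls l then (1:ℤ) else 0) := by
      intro l hl
      have hc1 : cls (n+1+l) = l := by
        rw [hclsdef]
        dsimp only
        rw [if_neg (by omega)]
        omega
      have hc2 : cls l = l := by
        rw [hclsdef]
        dsimp only
        rw [if_pos hl]
      rw [hc1, hc2]
    rw [hbijg (fun v => if i ≤ cls v then (1:ℤ) else 0),
      herase_range (fun v => if i ≤ cls v then (1:ℤ) else 0),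
      hsplit2 (fun v => if i ≤ cls v then (1:ℤ) else 0) hg]
    have h2 : ∑ v ∈ Finset.range (n+1), (if i ≤ cls v then (1:ℤ) else 0)
        = ∑ v ∈ Finset.range (n+1), (if i ≤ v then (1:ℤ) else 0) := by
      apply Finset.sum_congr rfl
      intro v hv
      rw [Finset.mem_range] at hv
      have hcv2 : cls v = v := by
        rw [hclsdef]
        dsimp only
        rw [if_pos (by omega)]
      rw [hcv2]
    rw [h2, count_range]
    omega
  have hcore : ∀ i ∈ Finset.Icc 1 n,
      ((n:ℤ)+1-(i:ℤ))*((n:ℤ)+2-(i:ℤ)) + max 0 (2*(n:ℤ)+2-(i:ℤ)-(c:ℤ))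
        ≤ ∑ j ∈ (Finset.univ.erase cpos).filter (fun j => i ≤ cls ((π j:ℕ))), Wf j := by
    intro i hi
    rw [Finset.mem_Icc] at hi
    have hAcard : ((Finset.univ.erase cpos).filter (fun j => i ≤ cls ((π j:ℕ)))).card
        = 2*(n+1-i) := by
      have := hcardA i hi.1 hi.2
      omega
    have hAc : cpos ∉ (Finset.univ.erase cpos).filter (fun j => i ≤ cls ((π j:ℕ))) := by
      simp [Finset.mem_filter]
    have hcb := core_bound n c hcge cpos hcval.symm _ hAc (n+1-i) (by omega) (by omega) hAcard
    have hr1 : ((n+1-i:ℕ):ℤ) = (n:ℤ)+1-(i:ℤ) := by omega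
    rw [hr1] at hcb
    have hr2 : (n:ℤ)+1+((n:ℤ)+1-(i:ℤ))-(c:ℤ) = 2*(n:ℤ)+2-(i:ℤ)-(c:ℤ) := by ring
    rw [hr2] at hcb
    have hr3 : ((n:ℤ)+1-(i:ℤ))*(((n:ℤ)+1-(i:ℤ))+1) = ((n:ℤ)+1-(i:ℤ))*((n:ℤ)+2-(i:ℤ)) := by ring
    rw [hr3] at hcb
    simpa only [hWf] using hcb
  have hSWbound : ∑ i ∈ Finset.Icc 1 n, x i *
        (((n:ℤ)+1-(i:ℤ))*((n:ℤ)+2-(i:ℤ)) + max 0 (2*(n:ℤ)+2-(i:ℤ)-(c:ℤ)))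
      ≤ ∑ j ∈ Finset.univ.erase cpos, p ((π j:ℕ)) * Wf j := by
    rw [hSWX]
    apply Finset.sum_le_sum
    intro i hi
    have hxi : 0 ≤ x i := by
      rw [Finset.mem_Icc] at hi
      exact le_of_lt (hx i hi.1 hi.2)
    exact mul_le_mul_of_nonneg_left (hcore i hi) hxi
  have hsplitcore : ∑ i ∈ Finset.Icc 1 n, x i *
        (((n:ℤ)+1-(i:ℤ))*((n:ℤ)+2-(i:ℤ)) + max 0 (2*(n:ℤ)+2-(i:ℤ)-(c:ℤ)))
      = (∑ i ∈ Finset.Icc 1 n, x i * (((n:ℤ)+1-(i:ℤ))*((n:ℤ)+2-(i:ℤ))))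
        + ∑ i ∈ Finset.Icc 1 n, x i * max 0 (2*(n:ℤ)+2-(i:ℤ)-(c:ℤ)) := by
    rw [← Finset.sum_add_distrib]
    apply Finset.sum_congr rfl
    intro i _
    ring
  have hqq : QS = ∑ i ∈ Finset.Icc 1 n, x i * (((n:ℤ)+1-(i:ℤ))*((n:ℤ)+2-(i:ℤ))) := by
    rw [hQSdef]
    have h1 : ∀ j ∈ Finset.range (n+1), (2*(n:ℤ)+2-2*(j:ℤ)) * p j
        = ∑ i ∈ Finset.Icc 1 n, (if i ≤ j then (2*(n:ℤ)+2-2*(j:ℤ)) else 0) * x i := by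
      intro j hj
      rw [Finset.mem_range] at hj
      rw [hpx j (by omega), Finset.mul_sum]
      apply Finset.sum_congr rfl
      intro i _
      rw [mul_ite, mul_zero, ite_mul, zero_mul]
    rw [Finset.sum_congr rfl h1, Finset.sum_comm]
    apply Finset.sum_congr rfl
    intro i hi
    rw [Finset.mem_Icc] at hi
    rw [← Finset.sum_mul, inner_sum_q n i hi.2]
    ring
  have hTx : T = ∑ i ∈ Finset.Icc 1 n, x i * ((n:ℤ)+1-(i:ℤ)) := by
    rw [hTdef]
    have h1 : ∀ j ∈ Finset.range (n+1), p j
        = ∑ i ∈ Finset.Icc 1 n, (if i ≤ j then (1:ℤ) else 0) * x i := by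
      intro j hj
      rw [Finset.mem_range] at hj
      rw [hpx j (by omega)]
      apply Finset.sum_congr rfl
      intro i _
      rw [ite_mul, zero_mul, one_mul]
    rw [Finset.sum_congr rfl h1, Finset.sum_comm]
    apply Finset.sum_congr rfl
    intro i hi
    rw [Finset.mem_Icc] at hi
    rw [← Finset.sum_mul, inner_sum_T n i hi.2]
    ring
  -- ### prefix small mass at position n
  have hnFlt : n < 2*n+3 := by omega
  set nF : Fin (2*n+3) := ⟨n, hnFlt⟩ with hnFdef
  set Sn : ℤ := ∑ j ∈ Finset.Iic nF, p ((π j:ℕ)) with hSndef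
  have hjIic : ∀ j : Fin (2*n+3), j ∈ Finset.Iic nF → j ≠ cpos := by
    intro j hj hcon
    rw [Finset.mem_Iic, Fin.le_def] at hj
    have hjv : (j:ℕ) ≤ n := hj
    rw [hcon, ← hcval] at hjv
    omega
  have hDnF : ∑ j ∈ Finset.Iic nF, δ ((π j:ℕ)) = ((n:ℤ)+1)*M - 2*Sn := by
    have h1 : ∀ j ∈ Finset.Iic nF, δ ((π j:ℕ)) = M - 2 * p ((π j:ℕ)) := by
      intro j hj
      exact (hsmall (π j) (hcne j (hjIic j hj))).1
    rw [Finset.sum_congr rfl h1, Finset.sum_sub_distrib, Finset.sum_const, Fin.card_Iic,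
      ← Finset.mul_sum, ← hSndef]
    have h2 : ((nF:ℕ)) = n := by rw [hnFdef]
    rw [h2, nsmul_eq_mul]
    push_cast
    ring
  have hSnerase : ∑ j ∈ Finset.univ.erase cpos, (if (j:ℕ) ≤ n then p ((π j:ℕ)) else 0) = Sn := by
    have h1 : ∑ j : Fin (2*n+3), (if (j:ℕ) ≤ n then p ((π j:ℕ)) else 0)
        = (if ((cpos:ℕ)) ≤ n then p ((π cpos:ℕ)) else 0)
          + ∑ j ∈ Finset.univ.erase cpos, (if (j:ℕ) ≤ n then p ((π j:ℕ)) else 0) :=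
      (Finset.add_sum_erase _ _ (Finset.mem_univ cpos)).symm
    have h2 : (if ((cpos:ℕ)) ≤ n then p ((π cpos:ℕ)) else 0) = 0 := by
      rw [if_neg]
      rw [← hcval]
      omega
    have h3 : ∑ j : Fin (2*n+3), (if (j:ℕ) ≤ n then p ((π j:ℕ)) else 0) = Sn := by
      rw [hSndef, ← Finset.sum_filter]
      congr 1
      ext j
      simp only [Finset.mem_filter, Finset.mem_univ, true_and, Finset.mem_Iic]
      rw [Fin.le_def, hnFdef]
    linarith [h1, h2, h3]
  -- ### main kills
  have hknotn : (k:ℕ) ≠ n := by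
    intro hkv
    have hckgt : (k:ℕ) < c := by omega
    have hmaster := master_formula n B M T ML0 Q0 QS SJ p δ π cpos k c hcval.symm
      (by rw [hπcpos]; exact hδbig) (by rw [hπcpos]; exact hpbig)
      (fun j hj => (hsmall (π j) (hcne j hj)).1) hov hML0v h2T hQ0v hSJv hckgt (Or.inl hkv)
      (by rw [hcval]; exact cpos.isLt)
    have hkvZ : ((k:ℕ):ℤ) = (n:ℤ) := by exact_mod_cast hkv
    -- penalty
    have hpen : ∑ j ∈ Finset.univ.erase cpos, p ((π j:ℕ)) *
          (if (j:ℕ) ≤ (k:ℕ) then ((k:ℕ):ℤ) - ((j:ℕ):ℤ) else ((j:ℕ):ℤ) - ((k:ℕ):ℤ))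
        = (∑ j ∈ Finset.univ.erase cpos, p ((π j:ℕ)) * Wf j) - Sn := by
      rw [← hSnerase, ← Finset.sum_sub_distrib]
      apply Finset.sum_congr rfl
      intro j _
      simp only [hWf]
      by_cases hjn : (j:ℕ) ≤ n
      · rw [if_pos (show (j:ℕ) ≤ (k:ℕ) by omega), if_pos hjn, if_pos hjn, hkvZ]
        ring
      · rw [if_neg (show ¬ (j:ℕ) ≤ (k:ℕ) by omega), if_neg hjn, if_neg hjn, hkvZ]
        ring
    -- Sn bound from hk
    have hkF : k = nF := Fin.ext (by show (k:ℕ) = n; exact hkv)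
    have hSnb : Sn ≤ T + B - 1 := by
      have hh := hk
      rw [hkF, hDnF, hML0v] at hh
      have hlt : Sn < T + B := by linarith
      omega
    -- V1
    have hV1 : T - (∑ i ∈ Finset.Icc 1 n, x i * max 0 (2*(n:ℤ)+2-(i:ℤ)-(c:ℤ)))
        ≤ 2*B*((c:ℤ)-(n:ℤ)-1) := by
      have h1 : T - (∑ i ∈ Finset.Icc 1 n, x i * max 0 (2*(n:ℤ)+2-(i:ℤ)-(c:ℤ)))
          = ∑ i ∈ Finset.Icc 1 n, x i * (((n:ℤ)+1-(i:ℤ)) - max 0 (2*(n:ℤ)+2-(i:ℤ)-(c:ℤ))) := by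
        rw [hTx, ← Finset.sum_sub_distrib]
        apply Finset.sum_congr rfl
        intro i _
        ring
      have hcz : (n:ℤ)+1 ≤ (c:ℤ) := by exact_mod_cast hcge
      have h2 : ∀ i ∈ Finset.Icc 1 n,
          x i * (((n:ℤ)+1-(i:ℤ)) - max 0 (2*(n:ℤ)+2-(i:ℤ)-(c:ℤ))) ≤ x i * ((c:ℤ)-(n:ℤ)-1) := by
        intro i hi
        rw [Finset.mem_Icc] at hi
        apply mul_le_mul_of_nonneg_left _ (le_of_lt (hx i hi.1 hi.2))
        rcases le_or_gt (2*(n:ℤ)+2-(i:ℤ)-(c:ℤ)) 0 with hle | hlt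
        · rw [max_eq_left hle]
          have hiz : 1 ≤ (i:ℤ) := by exact_mod_cast hi.1
          linarith
        · rw [max_eq_right (le_of_lt hlt)]
          linarith
      calc T - (∑ i ∈ Finset.Icc 1 n, x i * max 0 (2*(n:ℤ)+2-(i:ℤ)-(c:ℤ)))
          = ∑ i ∈ Finset.Icc 1 n, x i * (((n:ℤ)+1-(i:ℤ)) - max 0 (2*(n:ℤ)+2-(i:ℤ)-(c:ℤ))) := h1
        _ ≤ ∑ i ∈ Finset.Icc 1 n, x i * ((c:ℤ)-(n:ℤ)-1) := Finset.sum_le_sum h2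
        _ = (∑ i ∈ Finset.Icc 1 n, x i) * ((c:ℤ)-(n:ℤ)-1) := (Finset.sum_mul _ _ _).symm
        _ = 2*B*((c:ℤ)-(n:ℤ)-1) := by rw [hB]
    have hFle : totalCompl (2*n+3) p δ ML0 π - (Q0 + B) ≤ 0 := by linarith [hQ]
    rw [hkvZ] at hmaster hpen
    linarith [hmaster, hpen, hSWbound, hsplitcore, hqq, hV1, hSnb, hFle]
  have hk1c : (k:ℕ) = n+1 → c = n+2 := by
    intro hkv
    by_contra hcon
    have hc3 : n+3 ≤ c := by
      have h1 : c ≠ n+1 := by rw [hkv] at hcnek; exact hcnek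
      omega
    have hc2n2 : c ≤ 2*n+2 := by
      rw [hcval]
      have := cpos.isLt
      omega
    have hn1 : 1 ≤ n := by omega
    have hckgt : (k:ℕ) < c := by omega
    have hmaster := master_formula n B M T ML0 Q0 QS SJ p δ π cpos k c hcval.symm
      (by rw [hπcpos]; exact hδbig) (by rw [hπcpos]; exact hpbig)
      (fun j hj => (hsmall (π j) (hcne j hj)).1) hov hML0v h2T hQ0v hSJv hckgt (Or.inr hkv)
      (by rw [hcval]; exact cpos.isLt)
    have hkvZ : ((k:ℕ):ℤ) = (n:ℤ)+1 := by exact_mod_cast hkv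
    -- penalty
    have hpen : ∑ j ∈ Finset.univ.erase cpos, p ((π j:ℕ)) *
          (if (j:ℕ) ≤ (k:ℕ) then ((k:ℕ):ℤ) - ((j:ℕ):ℤ) else ((j:ℕ):ℤ) - ((k:ℕ):ℤ))
        = (∑ j ∈ Finset.univ.erase cpos, p ((π j:ℕ)) * Wf j) - (2*T - Sn) := by
      rw [← h2T, ← hSnerase]
      have hshape : ∀ j ∈ Finset.univ.erase cpos, p ((π j:ℕ)) *
            (if (j:ℕ) ≤ (k:ℕ) then ((k:ℕ):ℤ) - ((j:ℕ):ℤ) else ((j:ℕ):ℤ) - ((k:ℕ):ℤ))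
          = p ((π j:ℕ)) * Wf j - (p ((π j:ℕ)) - (if (j:ℕ) ≤ n then p ((π j:ℕ)) else 0)) := by
        intro j _
        simp only [hWf]
        by_cases hjn : (j:ℕ) ≤ n
        · rw [if_pos (show (j:ℕ) ≤ (k:ℕ) by omega), if_pos hjn, if_pos hjn, hkvZ]
          ring
        · by_cases hjn1 : (j:ℕ) ≤ (k:ℕ)
          · have hjv : ((j:ℕ):ℤ) = (n:ℤ)+1 := by
              have : (j:ℕ) = n+1 := by omega
              exact_mod_cast this
            rw [if_pos hjn1, if_neg hjn, if_neg hjn, hkvZ, hjv]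
            ring
          · rw [if_neg hjn1, if_neg hjn, if_neg hjn, hkvZ]
            ring
      rw [Finset.sum_congr rfl hshape, Finset.sum_sub_distrib, Finset.sum_sub_distrib]
    -- Sn lower bound from hkmin at nF
    have hnFk : nF < k := by
      rw [Fin.lt_def]
      show n < (k:ℕ)
      omega
    have hSnb : T + B ≤ Sn := by
      have hh := hkmin nF hnFk
      rw [hDnF, hML0v] at hh
      linarith
    -- V2
    have hV2 : T - (∑ i ∈ Finset.Icc 1 n, x i * max 0 (2*(n:ℤ)+2-(i:ℤ)-(c:ℤ)))
        ≤ 2*B*((c:ℤ)-(n:ℤ)-1) - ((c:ℤ)-(n:ℤ)-2) * x n := by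
      have h1 : T - (∑ i ∈ Finset.Icc 1 n, x i * max 0 (2*(n:ℤ)+2-(i:ℤ)-(c:ℤ)))
          = ∑ i ∈ Finset.Icc 1 n, x i * (((n:ℤ)+1-(i:ℤ)) - max 0 (2*(n:ℤ)+2-(i:ℤ)-(c:ℤ))) := by
        rw [hTx, ← Finset.sum_sub_distrib]
        apply Finset.sum_congr rfl
        intro i _
        ring
      have hcz : (n:ℤ)+3 ≤ (c:ℤ) := by exact_mod_cast hc3
      -- split off the top index
      obtain ⟨m, rfl⟩ : ∃ m, n = m + 1 := ⟨n-1, by omega⟩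
      have hsp : ∑ i ∈ Finset.Icc 1 (m+1), x i * (((↑(m+1):ℤ)+1-(i:ℤ)) - max 0 (2*(↑(m+1):ℤ)+2-(i:ℤ)-(c:ℤ)))
          = (∑ i ∈ Finset.Icc 1 m, x i * (((↑(m+1):ℤ)+1-(i:ℤ)) - max 0 (2*(↑(m+1):ℤ)+2-(i:ℤ)-(c:ℤ))))
            + x (m+1) * (((↑(m+1):ℤ)+1-(↑(m+1):ℤ)) - max 0 (2*(↑(m+1):ℤ)+2-(↑(m+1):ℤ)-(c:ℤ))) :=
        Finset.sum_Icc_succ_top (by omega) _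
      have hxsplit : (∑ i ∈ Finset.Icc 1 m, x i) = 2*B - x (m+1) := by
        have := Finset.sum_Icc_succ_top (show 1 ≤ m+1 by omega) x
        rw [hB] at this
        linarith
      have htop : (((↑(m+1):ℤ)+1-(↑(m+1):ℤ)) - max 0 (2*(↑(m+1):ℤ)+2-(↑(m+1):ℤ)-(c:ℤ))) = 1 := by
        have hmz : 2*(↑(m+1):ℤ)+2-(↑(m+1):ℤ)-(c:ℤ) ≤ 0 := by push_cast at hcz ⊢; linarith
        rw [max_eq_left hmz]
        ring
      have h2 : ∀ i ∈ Finset.Icc 1 m,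
          x i * (((↑(m+1):ℤ)+1-(i:ℤ)) - max 0 (2*(↑(m+1):ℤ)+2-(i:ℤ)-(c:ℤ)))
            ≤ x i * ((c:ℤ)-(↑(m+1):ℤ)-1) := by
        intro i hi
        rw [Finset.mem_Icc] at hi
        apply mul_le_mul_of_nonneg_left _ (le_of_lt (hx i hi.1 (by omega)))
        rcases le_or_gt (2*(↑(m+1):ℤ)+2-(i:ℤ)-(c:ℤ)) 0 with hle | hlt
        · rw [max_eq_left hle]
          have hiz : 1 ≤ (i:ℤ) := by exact_mod_cast hi.1
          linarith
        · rw [max_eq_right (le_of_lt hlt)]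
          linarith
      have h3 : (∑ i ∈ Finset.Icc 1 m, x i * (((↑(m+1):ℤ)+1-(i:ℤ)) - max 0 (2*(↑(m+1):ℤ)+2-(i:ℤ)-(c:ℤ))))
          ≤ (2*B - x (m+1)) * ((c:ℤ)-(↑(m+1):ℤ)-1) := by
        calc (∑ i ∈ Finset.Icc 1 m, x i * (((↑(m+1):ℤ)+1-(i:ℤ)) - max 0 (2*(↑(m+1):ℤ)+2-(i:ℤ)-(c:ℤ))))
            ≤ ∑ i ∈ Finset.Icc 1 m, x i * ((c:ℤ)-(↑(m+1):ℤ)-1) := Finset.sum_le_sum h2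
          _ = (∑ i ∈ Finset.Icc 1 m, x i) * ((c:ℤ)-(↑(m+1):ℤ)-1) := (Finset.sum_mul _ _ _).symm
          _ = (2*B - x (m+1)) * ((c:ℤ)-(↑(m+1):ℤ)-1) := by rw [hxsplit]
      rw [h1, hsp, htop]
      have hfin : (2*B - x (m+1)) * ((c:ℤ)-(↑(m+1):ℤ)-1) + x (m+1) * 1
          = 2*B*((c:ℤ)-(↑(m+1):ℤ)-1) - ((c:ℤ)-(↑(m+1):ℤ)-2) * x (m+1) := by ring
      linarith [h3, hfin]
    have hxn1 : 1 ≤ x n := hx n hn1 le_rfl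
    have hprod : 1 ≤ ((c:ℤ)-(n:ℤ)-2) * x n := by
      have ha : 1 ≤ (c:ℤ)-(n:ℤ)-2 := by
        have : (n:ℤ)+3 ≤ (c:ℤ) := by exact_mod_cast hc3
        linarith
      calc (1:ℤ) = 1*1 := by ring
        _ ≤ ((c:ℤ)-(n:ℤ)-2) * x n := mul_le_mul ha hxn1 (by norm_num) (by linarith)
    have hFle : totalCompl (2*n+3) p δ ML0 π - (Q0 + B) ≤ 0 := by linarith [hQ]
    rw [hkvZ] at hmaster hpen
    linarith [hmaster, hpen, hSWbound, hsplitcore, hqq, hV2, hSnb, hFle, hprod]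
  -- ### conclusion
  have hcases : (k:ℕ) = n+1 ∨ (k:ℕ) = n+2 := by omega
  rcases hcases with hkv | hkv
  · have hcv : c = n+2 := hk1c hkv
    exact Or.inr (Or.inl ⟨by omega, ⟨hkv, hcv⟩, by omega⟩)
  · have hcv : c = n+1 := hk2c hkv
    exact Or.inl ⟨⟨hcv, hkv⟩, by omega, by omega⟩
end
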